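/- arXiv:1311.3254 — 9 statements merged into one kernel-verified Lean document; each statement's English description precedes it below -/
import Mathlib

section
/- Let d ≥ 2 be an integer, c > 0, f(p) = exp(−c·p^{d−1}), and let p* ∈ (0,1] be the unique fixed point of f. Then |f'(p*)| = 1 if and only if c = e/(d−1), where e is Euler's number. Moreover in that case p* = e^{−1/(d−1)}. -/
open Set

/-- For `f p = exp (-c p^(d-1))` with fixed point `p* ∈ (0,1]`, `|f'(p*)| = 1` iff
`c = e / (d-1)`, in which case `p* = exp (-1/(d-1))`. -/
theorem grp_criticality (d : ℕ) (hd : 2 ≤ d) (c : ℝ) (hc : 0 < c)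
    (f : ℝ → ℝ) (hf : f = fun p => Real.exp (-c * p ^ (d - 1)))
    (p : ℝ) (hp : p ∈ Ioc (0:ℝ) 1) (hfix : f p = p) :
    (|deriv f p| = 1 ↔ c = Real.exp 1 / ((d : ℝ) - 1)) ∧
      (c = Real.exp 1 / ((d : ℝ) - 1) → p = Real.exp (-1 / ((d : ℝ) - 1))) := by
  obtain ⟨hp0, hp1⟩ := hp
  set k := d - 1 with hk
  have hk1 : 1 ≤ k := by omega
  have hkR : ((d : ℝ) - 1) = (k : ℝ) := by
    have : (k : ℝ) = (d : ℝ) - 1 := by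
      rw [hk]; push_cast [Nat.cast_sub (by omega : 1 ≤ d)]; ring
    linarith
  have hkpos : (0:ℝ) < (k : ℝ) := by exact_mod_cast Nat.pos_of_ne_zero (by omega)
  have hexp : Real.exp (-c * p ^ k) = p := by
    rw [hf] at hfix; simpa using hfix
  have hlog : Real.log p = -c * p ^ k := by
    conv_lhs => rw [← hexp]
    rw [Real.log_exp]
  have hpk : p * p ^ (k - 1) = p ^ k := by
    rw [← pow_succ']
    congr 1; omega
  have hfd : deriv f p = p * (-c * ((k : ℝ) * p ^ (k - 1))) := by
    have h1 : HasDerivAt (fun q : ℝ => q ^ k) ((k : ℝ) * p ^ (k - 1)) p :=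
      hasDerivAt_pow k p
    have h2 : HasDerivAt f (Real.exp (-c * p ^ k) * (-c * ((k : ℝ) * p ^ (k - 1)))) p := by
      rw [hf]; exact (h1.const_mul (-c)).exp
    rw [h2.deriv, hexp]
  have habs : |deriv f p| = (k : ℝ) * (c * p ^ k) := by
    rw [hfd]
    have h3 : p * (-c * ((k : ℝ) * p ^ (k - 1))) = -((k : ℝ) * (c * p ^ k)) := by
      rw [← hpk]; ring
    rw [h3, abs_neg, abs_of_pos]
    positivity
  -- the fixed-point identity c * p^k = - log p
  have hcpk : c * p ^ k = - Real.log p := by linarith [hlog]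
  -- backward: c = e/k implies p = exp(-1/k)
  have hback : c = Real.exp 1 / (k : ℝ) → p = Real.exp (-1 / (k : ℝ)) := by
    intro hce
    set q := Real.exp (-1 / (k : ℝ)) with hq
    have hq0 : 0 < q := Real.exp_pos _
    have hqk : q ^ k = Real.exp (-1) := by
      rw [hq, ← Real.exp_nat_mul]
      congr 1
      field_simp
    have hgq : Real.log q + c * q ^ k = 0 := by
      rw [hq, Real.log_exp, hqk, hce]
      rw [Real.exp_neg]
      field_simp
      ring
    have hgp : Real.log p + c * p ^ k = 0 := by
      rw [hcpk]; ring
    -- strict monotonicity of g x = log x + c x^k on positives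
    have hmono : ∀ x y : ℝ, 0 < x → 0 < y → x < y →
        Real.log x + c * x ^ k < Real.log y + c * y ^ k := by
      intro x y hx hy hxy
      have h1 : Real.log x < Real.log y := Real.log_lt_log hx hxy
      have h2 : x ^ k < y ^ k := pow_lt_pow_left₀ hxy hx.le (by omega)
      nlinarith
    rcases lt_trichotomy p q with h | h | h
    · exfalso; have := hmono p q hp0 hq0 h; linarith
    · exact h
    · exfalso; have := hmono q p hq0 hp0 h; linarith
  constructor
  · rw [hkR]
    constructor
    · intro h1
      rw [habs] at h1
      -- k * (- log p) = 1
      have hlp : Real.log p = -1 / (k : ℝ) := by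
        rw [hcpk] at h1
        field_simp
        nlinarith
      have hpe : p = Real.exp (-1 / (k : ℝ)) := by
        rw [← Real.exp_log hp0, hlp]
      have hpk' : p ^ k = Real.exp (-1) := by
        rw [hpe, ← Real.exp_nat_mul]
        congr 1
        field_simp
      have := hcpk
      rw [hpk', hlp, Real.exp_neg] at this
      field_simp at this ⊢
      nlinarith [Real.exp_pos 1]
    · intro hce
      have hpe := hback hce
      rw [habs, hcpk, hpe, Real.log_exp]
      field_simp
  · intro hce
    rw [hkR] at hce ⊢
    exact hback hce
end

section
/- Let d ≥ 2 be an integer and c > 0, and suppose p* ∈ (0,1] satisfies p* = exp(−c·p*^{d−1}). Then c·(d−1)·p*^{d−1} < 1 if and only if c < e/(d−1). -/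
open Set

lemma grp_aux_lemma (u : ℝ) (hu : 0 ≤ u) : u < 1 ↔ u * Real.exp u < Real.exp 1 := by
  constructor
  · intro h
    have h1 : Real.exp u < Real.exp 1 := Real.exp_lt_exp.mpr h
    nlinarith [Real.exp_pos u]
  · intro h
    by_contra hle
    push_neg at hle
    have h1 : Real.exp 1 ≤ Real.exp u := Real.exp_le_exp.mpr hle
    nlinarith [Real.exp_pos 1]

/-- Explicit RS stability criterion: if `p* ∈ (0,1]` satisfies `p* = exp (-c p*^(d-1))`, then
`c (d-1) p*^(d-1) < 1` iff `c < e/(d-1)`. -/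
theorem grp_stability_explicit (d : ℕ) (hd : 2 ≤ d) (c : ℝ) (hc : 0 < c)
    (p : ℝ) (hp : p ∈ Ioc (0:ℝ) 1) (hfix : p = Real.exp (-c * p ^ (d - 1))) :
    c * ((d : ℝ) - 1) * p ^ (d - 1) < 1 ↔ c < Real.exp 1 / ((d : ℝ) - 1) := by
  obtain ⟨hp0, hp1⟩ := hp
  have h2 : (2:ℝ) ≤ (d:ℝ) := by exact_mod_cast hd
  have hk0 : (0:ℝ) < (d:ℝ) - 1 := by linarith
  set k : ℝ := (d:ℝ) - 1 with hkdef
  set t : ℝ := c * p ^ (d - 1) with htdef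
  have ht0 : 0 ≤ t := by positivity
  have hpe : p = Real.exp (-t) := by rw [hfix, neg_mul]
  have hcast : ((d - 1 : ℕ) : ℝ) = k := by
    have : (1:ℕ) ≤ d := by omega
    push_cast [Nat.cast_sub this]
    ring
  have hx : p ^ (d - 1) = Real.exp (-(k * t)) := by
    rw [hpe, ← Real.exp_nat_mul, hcast]
    ring_nf
  have hct : c * Real.exp (-(k * t)) = t := by rw [← hx]
  have hc' : c = t * Real.exp (k * t) := by
    have h := congrArg (· * Real.exp (k * t)) hct
    rw [mul_assoc, ← Real.exp_add] at h
    simpa using h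
  have hku : 0 ≤ k * t := by positivity
  have hmain := grp_aux_lemma (k * t) hku
  constructor
  · intro h
    have hkt : k * t < 1 := by rw [htdef]; nlinarith
    have := hmain.mp hkt
    rw [hc', lt_div_iff₀ hk0]
    nlinarith
  · intro h
    rw [hc', lt_div_iff₀ hk0] at h
    have hkt : k * t < 1 := hmain.mpr (by nlinarith)
    rw [htdef] at hkt
    nlinarith
end

section
/- For d ≥ 2 and 0 < c < e/(d−1), the map f(p) = exp(−c·p^{d−1}) satisfies: f∘f has a unique fixed point in [0,1], equal to the unique fixed point p* of f. -/
open Set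

private lemma aux_exp_bound {s : ℝ} (hs : 1 < s) :
    1 - Real.log s < Real.exp (1 - s) := by
  have key : StrictMonoOn (fun x : ℝ => Real.exp (1 - x) + Real.log x) (Set.Ici 1) := by
    apply strictMonoOn_of_deriv_pos (convex_Ici 1)
    · apply ContinuousOn.add
      · exact (Real.continuous_exp.comp (continuous_const.sub continuous_id)).continuousOn
      · exact Real.continuousOn_log.mono (by intro x hx; simp at hx ⊢; linarith)
    · intro x hx
      rw [interior_Ici] at hx
      have hx1 : (1:ℝ) < x := hx
      have hx0 : (0:ℝ) < x := by linarith
      have hD : HasDerivAt (fun x : ℝ => Real.exp (1 - x) + Real.log x)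
          (Real.exp (1 - x) * (-1) + x⁻¹) x := by
        exact ((Real.hasDerivAt_exp (1 - x)).comp x ((hasDerivAt_id x).const_sub 1)).add
          (Real.hasDerivAt_log (ne_of_gt hx0))
      rw [hD.deriv]
      have h1 : x < Real.exp (x - 1) := by
        have := Real.add_one_lt_exp (x := x - 1) (by intro h; apply absurd hx1; intro _; linarith [sub_eq_zero.mp h])
        linarith
      have h2 : Real.exp (1 - x) * x < 1 := by
        have he : Real.exp (1 - x) * Real.exp (x - 1) = 1 := by
          rw [← Real.exp_add]; norm_num
        have := mul_lt_mul_of_pos_left h1 (Real.exp_pos (1 - x))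
        rwa [he] at this
      have h3 : Real.exp (1 - x) < x⁻¹ := by
        have : Real.exp (1 - x) < 1 / x := (lt_div_iff₀ hx0).mpr (by linarith)
        rwa [one_div] at this
      linarith
  have h := key (self_mem_Ici) (le_of_lt hs) hs
  simp only [sub_self, Real.exp_zero, Real.log_one] at h
  linarith

private lemma aux_w_le {a b : ℝ} (ha : 0 < a) (hab : a ≤ b) (hb : b ≤ 1) :
    b - Real.log b ≤ a - Real.log a := by
  have hb0 : 0 < b := lt_of_lt_of_le ha hab
  have h2 : Real.log (a / b) ≤ a / b - 1 := Real.log_le_sub_one_of_pos (div_pos ha hb0)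
  rw [Real.log_div (ne_of_gt ha) (ne_of_gt hb0)] at h2
  have h3 : a / b - 1 = (a - b) / b := by field_simp
  have h4 : (a - b) / b ≤ a - b := by
    rw [div_le_iff₀ hb0]
    nlinarith
  linarith

private lemma aux_no_cycle {lam s t : ℝ} (hlam0 : 0 < lam) (hlam : lam < Real.exp 1)
    (hst : s = lam * Real.exp (-t)) (hts : t = lam * Real.exp (-s)) (h : t < s) : False := by
  have hs0 : 0 < s := hst ▸ mul_pos hlam0 (Real.exp_pos _)
  have ht0 : 0 < t := hts ▸ mul_pos hlam0 (Real.exp_pos _)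
  have hls : Real.log s = Real.log lam - t := by
    rw [hst, Real.log_mul (ne_of_gt hlam0) (ne_of_gt (Real.exp_pos _)), Real.log_exp]; ring
  have hlt : Real.log t = Real.log lam - s := by
    rw [hts, Real.log_mul (ne_of_gt hlam0) (ne_of_gt (Real.exp_pos _)), Real.log_exp]; ring
  have hdiff : s - t = Real.log s - Real.log t := by linarith
  -- t < 1
  have ht1 : t < 1 := by
    have hne : s / t ≠ 1 := by
      intro hh
      have : s = t := by field_simp at hh; linarith
      linarith
    have h1 : Real.log (s / t) < s / t - 1 := Real.log_lt_sub_one_of_pos (div_pos hs0 ht0) hne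
    rw [Real.log_div (ne_of_gt hs0) (ne_of_gt ht0)] at h1
    have h2 : s / t - 1 = (s - t) / t := by field_simp
    rw [h2] at h1
    -- s - t < (s - t)/t  with s - t > 0 forces t < 1
    by_contra hcon
    push_neg at hcon
    have : (s - t) / t ≤ s - t := by
      rw [div_le_iff₀ ht0]; nlinarith
    linarith
  -- 1 < s
  have hs1 : 1 < s := by
    have hne : t / s ≠ 1 := by
      intro hh
      have : t = s := by field_simp at hh; linarith
      linarith
    have h1 : Real.log (t / s) < t / s - 1 := Real.log_lt_sub_one_of_pos (div_pos ht0 hs0) hne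
    rw [Real.log_div (ne_of_gt ht0) (ne_of_gt hs0)] at h1
    have h2 : t / s - 1 = (t - s) / s := by field_simp
    rw [h2] at h1
    by_contra hcon
    push_neg at hcon
    have : (t - s) / s ≤ t - s := by
      rw [div_le_iff₀ hs0]; nlinarith
    linarith
  have hloglam : Real.log lam < 1 := by
    have := Real.log_lt_log hlam0 hlam
    rwa [Real.log_exp] at this
  have hlt1 : Real.log t < 1 - s := by rw [hlt]; linarith
  have htlt : t < Real.exp (1 - s) := by
    calc t = Real.exp (Real.log t) := (Real.exp_log ht0).symm
    _ < Real.exp (1 - s) := Real.exp_lt_exp.2 hlt1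
  have hb1 : Real.exp (1 - s) ≤ 1 := Real.exp_le_one_iff.2 (by linarith)
  have hw := aux_w_le ht0 htlt.le hb1
  rw [Real.log_exp] at hw
  have hwe : t - Real.log t = s - Real.log s := by linarith
  have hfin := aux_exp_bound hs1
  linarith

/-- For `d ≥ 2` and `0 < c < e/(d-1)`, `f ∘ f` with `f p = exp (-c p^(d-1))` has a unique
fixed point in `[0,1]`, which is also a fixed point of `f`. -/
theorem grp_squared_operator_unique_fixed_point (d : ℕ) (hd : 2 ≤ d) (c : ℝ)
    (hc : 0 < c) (hcs : c < Real.exp 1 / ((d : ℝ) - 1))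
    (f : ℝ → ℝ) (hf : f = fun p => Real.exp (-c * p ^ (d - 1))) :
    (∃! p, p ∈ Icc (0:ℝ) 1 ∧ f (f p) = p) ∧
      ∀ p ∈ Icc (0:ℝ) 1, f (f p) = p → f p = p := by
  subst hf
  set k := d - 1 with hkdef
  have hk0 : k ≠ 0 := by omega
  have hdc : ((k : ℕ) : ℝ) = (d : ℝ) - 1 := by
    rw [hkdef]; push_cast [Nat.cast_sub (show 1 ≤ d by omega)]; ring
  have hkpos : (0:ℝ) < (k : ℝ) := by
    rw [hdc]
    have : (2:ℝ) ≤ (d : ℝ) := by exact_mod_cast hd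
    linarith
  have hlam : (k : ℝ) * c < Real.exp 1 := by
    have := (lt_div_iff₀ (by rw [← hdc]; exact hkpos)).mp hcs
    rw [← hdc] at this
    linarith
  have hlam0 : 0 < (k : ℝ) * c := mul_pos hkpos hc
  -- key: any fixed point of f ∘ f is a fixed point of f
  have key : ∀ p ∈ Icc (0:ℝ) 1,
      Real.exp (-c * (Real.exp (-c * p ^ k)) ^ k) = p → Real.exp (-c * p ^ k) = p := by
    intro p hp hfp
    have hp0 : 0 < p := hfp ▸ Real.exp_pos _
    set q := Real.exp (-c * p ^ k) with hqdef
    have hq0 : 0 < q := Real.exp_pos _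
    have hlq : Real.log q = -(c * p ^ k) := by rw [hqdef, Real.log_exp]; ring
    have hlp : Real.log p = -(c * q ^ k) := by rw [← hfp, Real.log_exp]; ring
    have hpk : p ^ k = Real.exp ((k : ℝ) * Real.log p) := by
      rw [Real.exp_nat_mul, Real.exp_log hp0]
    have hqk : q ^ k = Real.exp ((k : ℝ) * Real.log q) := by
      rw [Real.exp_nat_mul, Real.exp_log hq0]
    set s := (k : ℝ) * (-(Real.log p)) with hsdef
    set t := (k : ℝ) * (-(Real.log q)) with htdef
    have hst : s = ((k : ℝ) * c) * Real.exp (-t) := by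
      rw [hsdef]
      have : -Real.log p = c * q ^ k := by linarith
      rw [this, hqk]
      have : (k : ℝ) * Real.log q = -t := by rw [htdef]; ring
      rw [this]; ring
    have hts : t = ((k : ℝ) * c) * Real.exp (-s) := by
      rw [htdef]
      have : -Real.log q = c * p ^ k := by linarith
      rw [this, hpk]
      have : (k : ℝ) * Real.log p = -s := by rw [hsdef]; ring
      rw [this]; ring
    rcases lt_trichotomy s t with h | h | h
    · exact absurd h (by intro hh; exact aux_no_cycle hlam0 hlam hts hst hh)
    · have hlpq : Real.log p = Real.log q := by
        have := mul_left_cancel₀ (ne_of_gt hkpos) (h : (k:ℝ) * -Real.log p = (k:ℝ) * -Real.log q)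
        linarith
      calc q = Real.exp (Real.log q) := (Real.exp_log hq0).symm
      _ = Real.exp (Real.log p) := by rw [hlpq]
      _ = p := Real.exp_log hp0
    · exact absurd h (by intro hh; exact aux_no_cycle hlam0 hlam hst hts hh)
  constructor
  · -- existence and uniqueness
    have hcont : ContinuousOn (fun p : ℝ => Real.exp (-c * p ^ k) - p) (Icc 0 1) := by
      apply ContinuousOn.sub _ continuousOn_id
      exact (Real.continuous_exp.comp (((continuous_const : Continuous fun _ : ℝ => c).mul (continuous_pow k)).neg.congr
        (by intro x; simp only [Pi.neg_apply, Pi.mul_apply]; ring))).continuousOn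
    have hiv := intermediate_value_Icc' (by norm_num : (0:ℝ) ≤ 1) hcont
    have hg0 : (fun p : ℝ => Real.exp (-c * p ^ k) - p) 0 = 1 := by
      simp [zero_pow hk0]
    have hg1 : (fun p : ℝ => Real.exp (-c * p ^ k) - p) 1 ≤ 0 := by
      simp only [one_pow, mul_one, sub_nonpos]
      exact Real.exp_le_one_iff.2 (by linarith)
    have hmem : (0:ℝ) ∈ Icc ((fun p : ℝ => Real.exp (-c * p ^ k) - p) 1)
        ((fun p : ℝ => Real.exp (-c * p ^ k) - p) 0) := by
      rw [hg0]
      exact ⟨by simpa using hg1, by norm_num⟩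
    obtain ⟨p, hpmem, hpfix⟩ := hiv hmem
    simp only at hpfix
    have hfix : Real.exp (-c * p ^ k) = p := by linarith [hpfix]
    -- uniqueness of fixed points of f on [0,1]
    have funiq : ∀ x ∈ Icc (0:ℝ) 1, Real.exp (-c * x ^ k) = x → x = p := by
      intro x hx hfx
      by_contra hne
      rcases lt_or_gt_of_ne hne with hlt | hgt
      · have hpow : x ^ k < p ^ k := pow_lt_pow_left₀ hlt hx.1 hk0
        have : Real.exp (-c * p ^ k) < Real.exp (-c * x ^ k) :=
          Real.exp_lt_exp.2 (by nlinarith)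
        rw [hfix, hfx] at this
        linarith
      · have hpow : p ^ k < x ^ k := pow_lt_pow_left₀ hgt hpmem.1 hk0
        have : Real.exp (-c * x ^ k) < Real.exp (-c * p ^ k) :=
          Real.exp_lt_exp.2 (by nlinarith)
        rw [hfix, hfx] at this
        linarith
    refine ⟨p, ⟨hpmem, ?_⟩, ?_⟩
    · show Real.exp (-c * (Real.exp (-c * p ^ k)) ^ k) = p
      rw [hfix, hfix]
    · rintro y ⟨hy, hy2⟩
      exact funiq y hy (key y hy hy2)
  · exact key
end

section
/- Let G be a tree factor graph (the bipartite incidence graph is a finite tree) with at least one variable node. Then either some variable node is isolated, or G contains a pendant: a variable node i such that all of its factor neighbors except at most one have degree 1 (i.e., have i as their only variable neighbor). -/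
open SimpleGraph Sum

/-- If the bipartite incidence graph of a finite factor graph is a tree and there is at least
one variable node, then either some variable node is isolated, or there is a pendant:
a variable node all of whose factor neighbours, except at most one, have it as their
only variable neighbour. -/
theorem tree_factor_graph_has_pendant {V F : Type*} [Fintype V] [Fintype F] [Nonempty V]
    (E : V → F → Prop)
    (htree : (SimpleGraph.fromRel
        (fun x y : V ⊕ F => ∃ (i : V) (r : F), x = Sum.inl i ∧ y = Sum.inr r ∧ E i r)).IsTree) :
    (∃ i : V, ∀ r : F, ¬ E i r) ∨
      (∃ i : V, ∀ r s : F, E i r → E i s →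
        ¬ (∀ j : V, E j r → j = i) → ¬ (∀ j : V, E j s → j = i) → r = s) := by
  classical
  by_contra hcon
  push_neg at hcon
  obtain ⟨h1, h2⟩ := hcon
  set G := SimpleGraph.fromRel
      (fun x y : V ⊕ F => ∃ (i : V) (r : F), x = Sum.inl i ∧ y = Sum.inr r ∧ E i r) with hG
  have hconn : G.Connected := htree.1
  -- adjacency characterization
  have hadj : ∀ x y : V ⊕ F, G.Adj x y ↔
      (∃ i r, x = inl i ∧ y = inr r ∧ E i r) ∨ (∃ i r, y = inl i ∧ x = inr r ∧ E i r) := by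
    intro x y
    rw [hG, SimpleGraph.fromRel_adj]
    constructor
    · rintro ⟨-, h | h⟩
      · exact Or.inl h
      · exact Or.inr h
    · rintro (⟨i, r, rfl, rfl, h⟩ | ⟨i, r, rfl, rfl, h⟩)
      · exact ⟨by simp, Or.inl ⟨i, r, rfl, rfl, h⟩⟩
      · exact ⟨by simp, Or.inr ⟨i, r, rfl, rfl, h⟩⟩
  have hA : ∀ (i : V) (r : F), E i r → G.Adj (inl i) (inr r) := by
    intro i r h
    exact (hadj _ _).2 (Or.inl ⟨i, r, rfl, rfl, h⟩)
  -- the two-coloring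
  set side : V ⊕ F → ZMod 2 := Sum.elim (fun _ => 0) (fun _ => 1) with hside
  have hflip : ∀ {x y : V ⊕ F}, G.Adj x y → side y = side x + 1 := by
    intro x y h
    rcases (hadj x y).1 h with ⟨i, r, rfl, rfl, -⟩ | ⟨i, r, rfl, rfl, -⟩ <;> simp [hside] <;> decide
  have hwalkpar : ∀ {x y : V ⊕ F} (p : G.Walk x y), (p.length : ZMod 2) = side y - side x := by
    intro x y p
    induction p with
    | nil => simp
    | cons h p ih =>
      rw [SimpleGraph.Walk.length_cons]
      push_cast
      rw [ih, hflip h]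
      ring
  set v0 : V ⊕ F := inl (Classical.arbitrary V) with hv0
  set d : V ⊕ F → ℕ := fun u => G.dist v0 u with hd
  have hdistpar : ∀ u : V ⊕ F, (d u : ZMod 2) = side u := by
    intro u
    obtain ⟨p, hp⟩ := hconn.exists_walk_length_eq_dist v0 u
    have := hwalkpar p
    rw [hp] at this
    rw [hd]
    simp only [this, hv0, hside]
    rw [hv0, hside] at this
    simpa using this
  have hne : ∀ (i : V) (r : F), d (inl i) ≠ d (inr r) := by
    intro i r hEq
    have a := hdistpar (inl i)
    have b := hdistpar (inr r)
    rw [hEq, b] at a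
    simp [hside] at a
  -- distance changes by at most one along an edge
  have hstep : ∀ {x y : V ⊕ F}, G.Adj x y → d y ≤ d x + 1 := by
    intro x y h
    have ht := hconn.dist_triangle (u := v0) (v := x) (w := y)
    rwa [show G.dist x y = 1 from SimpleGraph.dist_eq_one_iff_adj.mpr h] at ht
  -- unique parent in a tree
  have hparent : ∀ (u w1 w2 : V ⊕ F), G.Adj w1 u → G.Adj w2 u →
      d w1 + 1 = d u → d w2 + 1 = d u → w1 = w2 := by
    intro u w1 w2 a1 a2 e1 e2
    obtain ⟨p1, hp1⟩ := hconn.exists_walk_length_eq_dist v0 w1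
    obtain ⟨p2, hp2⟩ := hconn.exists_walk_length_eq_dist v0 w2
    have l1 : (p1.concat a1).length = G.dist v0 u := by
      rw [SimpleGraph.Walk.length_concat, hp1]; exact e1
    have l2 : (p2.concat a2).length = G.dist v0 u := by
      rw [SimpleGraph.Walk.length_concat, hp2]; exact e2
    have path1 : (p1.concat a1).IsPath := SimpleGraph.Walk.isPath_of_length_eq_dist _ l1
    have path2 : (p2.concat a2).IsPath := SimpleGraph.Walk.isPath_of_length_eq_dist _ l2
    obtain ⟨q, -, huq⟩ := htree.existsUnique_path v0 u
    have heq : p1.concat a1 = p2.concat a2 := (huq _ path1).trans (huq _ path2).symm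
    have hlen : p1.length = p2.length := by
      have := l1.trans l2.symm
      rw [SimpleGraph.Walk.length_concat, SimpleGraph.Walk.length_concat] at this
      omega
    have g1 : (p1.concat a1).getVert p1.length = w1 := by
      rw [SimpleGraph.Walk.concat_eq_append, SimpleGraph.Walk.getVert_append]
      simp
    have g2 : (p2.concat a2).getVert p1.length = w2 := by
      rw [SimpleGraph.Walk.concat_eq_append, SimpleGraph.Walk.getVert_append, hlen]
      simp
    rw [← g1, ← g2, heq]
  -- take a vertex at maximal distance from v0
  haveI : Nonempty (V ⊕ F) := ⟨v0⟩
  obtain ⟨u, hmax⟩ := Finite.exists_max d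
  cases u with
  | inl i =>
    obtain ⟨r, s, hir, his, -, -, hrs⟩ := h2 i
    have h1r : d (inr r) + 1 = d (inl i) := by
      have a := hstep (hA i r hir)
      have b := hstep (hA i r hir).symm
      have c := hmax (inr r)
      have e := hne i r
      omega
    have h1s : d (inr s) + 1 = d (inl i) := by
      have a := hstep (hA i s his)
      have b := hstep (hA i s his).symm
      have c := hmax (inr s)
      have e := hne i s
      omega
    have := hparent (inl i) (inr r) (inr s) (hA i r hir).symm (hA i s his).symm h1r h1s
    exact hrs (by injection this)
  | inr r0 =>
    set M := d (inr r0) with hM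
    have hM0 : M ≠ 0 := by
      intro h0
      have := hdistpar (inr r0)
      rw [← hM, h0] at this
      simp [hside] at this
    -- find a variable neighbor of r0
    obtain ⟨p, hp⟩ := hconn.exists_walk_length_eq_dist v0 (inr r0)
    have hpne : ¬ p.reverse.Nil := by
      rw [SimpleGraph.Walk.nil_iff_length_eq, SimpleGraph.Walk.length_reverse, hp]
      exact hM0
    have hadjn : G.Adj (inr r0) (p.reverse.getVert 1) := SimpleGraph.Walk.adj_snd hpne
    obtain ⟨i0, hi0⟩ : ∃ i0 : V, E i0 r0 := by
      rcases (hadj _ _).1 hadjn with ⟨i, r, h1', -, -⟩ | ⟨i, r, h1', h2', h3'⟩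
      · exact absurd h1' (by simp)
      · exact ⟨i, by rwa [show r = r0 from by injection h2' with h; exact h.symm] at h3'⟩
    have hbi0 : d (inl i0) + 1 = M := by
      have a := hstep (hA i0 r0 hi0)
      have b := hstep (hA i0 r0 hi0).symm
      have c := hmax (inl i0)
      have e := hne i0 r0
      omega
    -- any factor adjacent to i0 at maximal distance has i0 as its only variable
    have hMfull : ∀ (t : F) (j : V), E i0 t → E j t → j ≠ i0 → d (inr t) ≠ M := by
      intro t j hit hjt hjne hdM
      have hdj : d (inl j) + 1 = d (inr t) := by
        have a := hstep (hA j t hjt)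
        have b := hstep (hA j t hjt).symm
        have c := hmax (inl j)
        have e := hne j t
        omega
      have hdi : d (inl i0) + 1 = d (inr t) := by rw [hdM]; exact hbi0
      have := hparent (inr t) (inl j) (inl i0) (hA j t hjt) (hA i0 t hit) hdj hdi
      exact hjne (by injection this)
    obtain ⟨r', s', hir', his', hnr', hns', hrs'⟩ := h2 i0
    obtain ⟨j1, hj1, hj1ne⟩ := hnr'
    obtain ⟨j2, hj2, hj2ne⟩ := hns'
    have hpar' : ∀ t : F, E i0 t → d (inr t) ≠ M → d (inr t) + 1 = d (inl i0) := by
      intro t hit hnet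
      have a := hstep (hA i0 t hit)
      have b := hstep (hA i0 t hit).symm
      have c := hmax (inr t)
      have e := hne i0 t
      omega
    have e1 := hpar' r' hir' (hMfull r' j1 hir' hj1 hj1ne)
    have e2 := hpar' s' his' (hMfull s' j2 his' hj2 hj2ne)
    have := hparent (inl i0) (inr r') (inr s')
      (hA i0 r' hir').symm (hA i0 s' his').symm e1 e2
    exact hrs' (by injection this)
end

section
/- Let G be a factor graph and let i be a pendant variable node of G, i.e., all factor neighbors of i except at most one have i as their only variable neighbor. Then there exists a maximum set packing of G containing i. -/
open Finset

/-- If `i` is a pendant variable node (all its factor neighbours except at most one have `i`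
as their only variable neighbour), then some maximum set packing contains `i`. -/
theorem pendant_in_some_maximum_set_packing {V F : Type*} [Fintype V] [Fintype F]
    [DecidableEq V] (E : V → F → Prop) [∀ i r, Decidable (E i r)] (i : V)
    (hpend : ∀ r s : F, E i r → E i s →
      ¬ (∀ j : V, E j r → j = i) → ¬ (∀ j : V, E j s → j = i) → r = s) :
    ∃ S : Finset V, i ∈ S ∧ (∀ r : F, (S.filter fun j => E j r).card ≤ 1) ∧
      ∀ S' : Finset V, (∀ r : F, (S'.filter fun j => E j r).card ≤ 1) →
        S'.card ≤ S.card := by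
  classical
  set packs : Finset (Finset V) :=
    Finset.univ.filter (fun S => ∀ r : F, (S.filter fun j => E j r).card ≤ 1) with hpacks
  have h0 : (∅ : Finset V) ∈ packs := by simp [hpacks]
  obtain ⟨T, hTmem, hTmax⟩ := packs.exists_max_image Finset.card ⟨∅, h0⟩
  have hTpack : ∀ r : F, (T.filter fun j => E j r).card ≤ 1 := by
    simpa [hpacks] using hTmem
  have hTmax' : ∀ S' : Finset V, (∀ r : F, (S'.filter fun j => E j r).card ≤ 1) →
      S'.card ≤ T.card := fun S' hS' => hTmax S' (by simp [hpacks, hS'])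
  by_cases hi : i ∈ T
  · exact ⟨T, hi, hTpack, hTmax'⟩
  · set bad : Finset V := T.filter (fun j => ∃ r, E i r ∧ E j r) with hbad
    have hbadsub : bad ⊆ T := filter_subset _ _
    have hbadcard : bad.card ≤ 1 := by
      rw [card_le_one]
      intro a ha b hb
      simp only [hbad, mem_filter] at ha hb
      obtain ⟨haT, r, hir, har⟩ := ha
      obtain ⟨hbT, s, his, hbs⟩ := hb
      have hanot : ¬ (∀ j : V, E j r → j = i) := fun h => hi ((h a har) ▸ haT)
      have hbnot : ¬ (∀ j : V, E j s → j = i) := fun h => hi ((h b hbs) ▸ hbT)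
      have hrs : r = s := hpend r s hir his hanot hbnot
      subst hrs
      have := hTpack r
      rw [card_le_one] at this
      exact this a (mem_filter.mpr ⟨haT, har⟩) b (mem_filter.mpr ⟨hbT, hbs⟩)
    refine ⟨insert i (T \ bad), mem_insert_self _ _, ?_, ?_⟩
    · intro r
      by_cases hir : E i r
      · have : (insert i (T \ bad)).filter (fun j => E j r) = {i} := by
          ext j
          simp only [mem_filter, mem_insert, mem_sdiff, mem_singleton, hbad]
          constructor
          · rintro ⟨hj | ⟨hjT, hjbad⟩, hjr⟩
            · exact hj
            · exact absurd ⟨hjT, r, hir, hjr⟩ hjbad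
          · rintro rfl; exact ⟨Or.inl rfl, hir⟩
        rw [this]; simp
      · have hsub : (insert i (T \ bad)).filter (fun j => E j r) ⊆
            T.filter (fun j => E j r) := by
          intro j hj
          simp only [mem_filter, mem_insert, mem_sdiff] at hj ⊢
          rcases hj with ⟨hj | ⟨hjT, _⟩, hjr⟩
          · exact absurd (hj ▸ hjr) hir
          · exact ⟨hjT, hjr⟩
        exact le_trans (card_le_card hsub) (hTpack r)
    · intro S' hS'
      have h1 : (insert i (T \ bad)).card = (T \ bad).card + 1 := by
        rw [card_insert_of_notMem (fun h => hi (mem_sdiff.mp h).1)]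
      have h2 : (T \ bad).card = T.card - bad.card := card_sdiff_of_subset hbadsub
      have h3 : T.card ≤ (insert i (T \ bad)).card := by
        rw [h1, h2]
        omega
      exact le_trans (hTmax' S' hS') h3
end

section
/- Let G be a factor graph, i a variable node, and let G' be the factor graph obtained by deleting i, all factor neighbors of i, and all variable neighbors of those factors. If S' is a set packing of G', then S' ∪ {i} is a set packing of G; moreover if i belongs to some maximum set packing of G, then the maximum set packing size of G equals 1 plus the maximum set packing size of G'. -/
open Finset

/-- Correctness of the removal step of the Generalized Karp-Sipser algorithm. `G'` is obtained
from `G` by deleting the variable `i`, its factor neighbours, and their variable neighbours;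
a set packing of `G'` is a finset of surviving variables satisfying the surviving constraints.
Then adding `i` to a packing of `G'` gives a packing of `G`, and if `i` belongs to some maximum
set packing of `G` then the maximum packing size of `G` is one plus that of `G'`. -/
theorem gks_removal_step {V F : Type*} [Fintype V] [Fintype F] [DecidableEq V]
    (E : V → F → Prop) [∀ i r, Decidable (E i r)] (i : V) :
    (∀ S' : Finset V,
      (∀ j ∈ S', j ≠ i ∧ ¬ ∃ r : F, E i r ∧ E j r) →
      (∀ r : F, ¬ E i r → (S'.filter fun j => E j r).card ≤ 1) →
      ∀ r : F, ((insert i S').filter fun j => E j r).card ≤ 1) ∧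
    ((∃ S : Finset V, i ∈ S ∧ (∀ r : F, (S.filter fun j => E j r).card ≤ 1) ∧
        ∀ T : Finset V, (∀ r : F, (T.filter fun j => E j r).card ≤ 1) → T.card ≤ S.card) →
      sSup {n : ℕ | ∃ S : Finset V,
          (∀ r : F, (S.filter fun j => E j r).card ≤ 1) ∧ S.card = n} =
        1 + sSup {n : ℕ | ∃ S' : Finset V,
          (∀ j ∈ S', j ≠ i ∧ ¬ ∃ r : F, E i r ∧ E j r) ∧
          (∀ r : F, ¬ E i r → (S'.filter fun j => E j r).card ≤ 1) ∧ S'.card = n}) := by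
  have key : ∀ S' : Finset V,
      (∀ j ∈ S', j ≠ i ∧ ¬ ∃ r : F, E i r ∧ E j r) →
      (∀ r : F, ¬ E i r → (S'.filter fun j => E j r).card ≤ 1) →
      ∀ r : F, ((insert i S').filter fun j => E j r).card ≤ 1 := by
    intro S' h1 h2 r
    by_cases hir : E i r
    · have hsub : ((insert i S').filter fun j => E j r) ⊆ {i} := by
        intro j hj
        simp only [mem_filter, mem_insert] at hj
        rcases hj.1 with h | h
        · simp [h]
        · exact absurd ⟨r, hir, hj.2⟩ (h1 j h).2
      calc _ ≤ ({i} : Finset V).card := card_le_card hsub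
        _ = 1 := card_singleton i
    · rw [filter_insert, if_neg hir]
      exact h2 r hir
  refine ⟨key, ?_⟩
  rintro ⟨S, hiS, hpack, hmax⟩
  set A := {n : ℕ | ∃ S : Finset V,
      (∀ r : F, (S.filter fun j => E j r).card ≤ 1) ∧ S.card = n} with hA
  set B := {n : ℕ | ∃ S' : Finset V,
      (∀ j ∈ S', j ≠ i ∧ ¬ ∃ r : F, E i r ∧ E j r) ∧
      (∀ r : F, ¬ E i r → (S'.filter fun j => E j r).card ≤ 1) ∧ S'.card = n} with hB
  have hScard : 1 ≤ S.card := card_pos.mpr ⟨i, hiS⟩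
  -- erase i from S is in B
  have heraseB : S.card - 1 ∈ B := by
    refine ⟨S.erase i, ?_, ?_, by rw [card_erase_of_mem hiS]⟩
    · intro j hj
      refine ⟨ne_of_mem_erase hj, ?_⟩
      rintro ⟨r, hir, hjr⟩
      have hsub : ({i, j} : Finset V) ⊆ S.filter fun j => E j r := by
        intro k hk
        simp only [mem_insert, mem_singleton] at hk
        rcases hk with rfl | rfl
        · exact mem_filter.mpr ⟨hiS, hir⟩
        · exact mem_filter.mpr ⟨mem_of_mem_erase hj, hjr⟩
      have h2 : ({i, j} : Finset V).card = 2 := by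
        rw [card_insert_of_notMem (by simp [Ne.symm (ne_of_mem_erase hj)]), card_singleton]
      have := card_le_card hsub
      rw [h2] at this
      exact absurd (this.trans (hpack r)) (by norm_num)
    · intro r _
      exact le_trans (card_le_card (filter_subset_filter _ (erase_subset i S))) (hpack r)
  -- every element of B is ≤ S.card - 1
  have hBbd : ∀ n ∈ B, n ≤ S.card - 1 := by
    rintro n ⟨S', h1, h2, rfl⟩
    have hi : i ∉ S' := fun h => (h1 i h).1 rfl
    have := hmax (insert i S') (key S' h1 h2)
    rw [card_insert_of_notMem hi] at this
    omega
  have hAbd : ∀ n ∈ A, n ≤ S.card := by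
    rintro n ⟨T, hT, rfl⟩; exact hmax T hT
  have hAin : S.card ∈ A := ⟨S, hpack, rfl⟩
  have hsupA : sSup A = S.card :=
    le_antisymm (csSup_le ⟨S.card, hAin⟩ hAbd) (le_csSup ⟨S.card, hAbd⟩ hAin)
  have hsupB : sSup B = S.card - 1 :=
    le_antisymm (csSup_le ⟨S.card - 1, heraseB⟩ hBbd) (le_csSup ⟨S.card - 1, hBbd⟩ heraseB)
  rw [hsupA, hsupB]
  omega
end

section
/- Fix integers d ≥ 1 (variable degrees), and let t : E⃗ → {0,1} assign to every directed edge r→i (from factor r to its variable neighbor i) of a finite tree factor graph the value t_{r→i} = max({0} ∪ {1 − Σ_{s ∈ ∂j∖r} t_{s→j} : j ∈ ∂r ∖ i}) computed recursively from the leaves. Then every t_{r→i} ∈ {0,1}, and the quantity Σ_{r∈F} max({0} ∪ {1 − Σ_{s∈∂j∖r} t_{s→j} : j ∈ ∂r}) + Σ_{i∈V}(1−|∂i|)·max{0, 1 − Σ_{r∈∂i} t_{r→i}} equals the maximum set packing size of the tree. -/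
open Finset
open scoped Classical
set_option maxHeartbeats 1000000


/-- Message sent by variable `j` towards factor `r`: `1 - ∑_{s ∈ ∂j ∖ r} t_{s→j}`. -/
noncomputable def varMsg {V F : Type*} [Fintype F] (E : V → F → Prop)
    (t : F → V → ℝ) (r : F) (j : V) : ℝ :=
  1 - ∑ s ∈ Finset.univ.filter (fun s : F => E j s ∧ s ≠ r), t s j

/-- `max ({0} ∪ {1 - ∑_{s ∈ ∂j∖r} t_{s→j} : j ∈ ∂r ∖ i})`, where `i = none` means no variable
is excluded from the neighbourhood of the factor `r`. -/
noncomputable def factorMax {V F : Type*} [Fintype V] [Fintype F] (E : V → F → Prop)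
    (t : F → V → ℝ) (r : F) (i : Option V) : ℝ :=
  (insert (0:ℝ)
    ((Finset.univ.filter (fun j : V => E j r ∧ some j ≠ i)).image (varMsg E t r))).max'
    (Finset.insert_nonempty _ _)

namespace Bethe

section Tree
variable {α : Type*} {G : SimpleGraph α}

lemma exists_closer (hc : G.Connected) {x u : α} (h : x ≠ u) :
    ∃ w, G.Adj w u ∧ G.dist x w + 1 = G.dist x u := by
  have hd0 : G.dist u x ≠ 0 := by
    intro e
    exact h ((hc.dist_eq_zero_iff).mp e).symm
  obtain ⟨p, hp⟩ := hc.exists_walk_length_eq_dist u x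
  cases p with
  | nil => exact absurd rfl h
  | @cons _ w _ hadj q =>
    refine ⟨w, hadj.symm, ?_⟩
    have h1 : G.dist x w ≤ q.length := by
      rw [SimpleGraph.dist_comm]; exact SimpleGraph.dist_le q
    have h2 : G.dist x u ≤ G.dist x w + 1 := by
      calc G.dist x u ≤ G.dist x w + G.dist w u := hc.dist_triangle
        _ ≤ G.dist x w + 1 := by
            have : G.dist w u = 1 := SimpleGraph.dist_eq_one_iff_adj.mpr hadj.symm
            omega
    have h3 : q.length + 1 = G.dist u x := by simpa using hp
    rw [SimpleGraph.dist_comm] at h3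
    omega

lemma closer_unique (hc : G.Connected) (hac : G.IsAcyclic) {x u w w' : α}
    (h1 : G.Adj w u) (h2 : G.Adj w' u)
    (d1 : G.dist x w + 1 = G.dist x u) (d2 : G.dist x w' + 1 = G.dist x u) : w = w' := by
  obtain ⟨p, hp, hpl⟩ := hc.exists_path_of_dist x w
  obtain ⟨q, hq, hql⟩ := hc.exists_path_of_dist x w'
  have hP1 : (p.concat h1).IsPath := by
    apply SimpleGraph.Walk.isPath_of_length_eq_dist
    rw [SimpleGraph.Walk.length_concat]; omega
  have hP2 : (q.concat h2).IsPath := by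
    apply SimpleGraph.Walk.isPath_of_length_eq_dist
    rw [SimpleGraph.Walk.length_concat]; omega
  have heq : p.concat h1 = q.concat h2 := by
    have := hac.path_unique ⟨p.concat h1, hP1⟩ ⟨q.concat h2, hP2⟩
    exact congrArg Subtype.val this
  have hsupp : p.support.concat u = q.support.concat u := by
    have := congrArg SimpleGraph.Walk.support heq
    simpa [SimpleGraph.Walk.support_concat] using this
  have hsupp2 : p.support = q.support := by
    have := congrArg List.dropLast hsupp
    simpa [List.dropLast_concat] using this
  have hw : p.support.getLast (by simp [SimpleGraph.Walk.support_ne_nil]) = w :=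
    SimpleGraph.Walk.getLast_support p
  have hw' : q.support.getLast (by simp [SimpleGraph.Walk.support_ne_nil]) = w' :=
    SimpleGraph.Walk.getLast_support q
  rw [← hw, ← hw']
  congr 1

lemma adj_cases (hc : G.Connected) (hac : G.IsAcyclic) {u v : α} (h : G.Adj u v) (x : α) :
    G.dist x u + 1 = G.dist x v ∨ G.dist x v + 1 = G.dist x u := by
  by_cases hxu : x = u
  · subst hxu
    left
    have h1 : G.dist x v = 1 := SimpleGraph.dist_eq_one_iff_adj.mpr h
    rw [SimpleGraph.dist_self]
    omega
  by_cases hxv : x = v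
  · subst hxv
    right
    have h1 : G.dist x u = 1 := SimpleGraph.dist_eq_one_iff_adj.mpr h.symm
    rw [SimpleGraph.dist_self]
    omega
  have hne : G.dist x u ≠ G.dist x v := by
    intro hk
    obtain ⟨p, hp, hpl⟩ := hc.exists_path_of_dist x u
    have hvs : v ∉ p.support := by
      intro hv
      have hspec := p.take_spec hv
      have hlen : (p.takeUntil v hv).length + (p.dropUntil v hv).length = p.length := by
        rw [← SimpleGraph.Walk.length_append, hspec]
      have hd1 : G.dist x v ≤ (p.takeUntil v hv).length := SimpleGraph.dist_le _
      have hd2 : G.dist v u ≤ (p.dropUntil v hv).length := SimpleGraph.dist_le _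
      have hd3 : G.dist v u = 1 := SimpleGraph.dist_eq_one_iff_adj.mpr h.symm
      omega
    have hP1 : (p.concat h).IsPath := by
      rw [← SimpleGraph.Walk.isPath_reverse_iff, SimpleGraph.Walk.reverse_concat]
      refine SimpleGraph.Walk.IsPath.cons (by simp [hp]) ?_
      simp [SimpleGraph.Walk.support_reverse, hvs]
    obtain ⟨q, hq, hql⟩ := hc.exists_path_of_dist x v
    have : p.concat h = q := by
      have := hac.path_unique ⟨p.concat h, hP1⟩ ⟨q, hq⟩
      exact congrArg Subtype.val this
    have : (p.concat h).length = q.length := by rw [this]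
    rw [SimpleGraph.Walk.length_concat] at this
    omega
  have t1 : G.dist x v ≤ G.dist x u + 1 := by
    calc G.dist x v ≤ G.dist x u + G.dist u v := hc.dist_triangle
      _ ≤ G.dist x u + 1 := by
          have : G.dist u v = 1 := SimpleGraph.dist_eq_one_iff_adj.mpr h
          omega
  have t2 : G.dist x u ≤ G.dist x v + 1 := by
    calc G.dist x u ≤ G.dist x v + G.dist v u := hc.dist_triangle
      _ ≤ G.dist x v + 1 := by
          have : G.dist v u = 1 := SimpleGraph.dist_eq_one_iff_adj.mpr h.symm
          omega
  omega

end Tree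

section Tree2
variable {α : Type*} [Fintype α] {G : SimpleGraph α}

/-- The set of vertices strictly closer to `u` than to `v`; for adjacent `u v` in a tree this
is the subtree on `u`'s side of the edge. -/
noncomputable def Sset (G : SimpleGraph α) (u v : α) : Finset α :=
  univ.filter (fun x => G.dist x u < G.dist x v)

variable (hc : G.Connected) (hac : G.IsAcyclic)
include hc hac

lemma mem_Sset {u v : α} (h : G.Adj u v) {x : α} :
    x ∈ Sset G u v ↔ G.dist x u + 1 = G.dist x v := by
  simp only [Sset, mem_filter, mem_univ, true_and]
  constructor
  · intro hlt
    rcases adj_cases hc hac h x with h1 | h1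
    · exact h1
    · omega
  · intro h1; omega

lemma not_mem_Sset {u v : α} (h : G.Adj u v) {x : α} :
    x ∉ Sset G u v ↔ x ∈ Sset G v u := by
  rw [mem_Sset hc hac h, mem_Sset hc hac h.symm]
  rcases adj_cases hc hac h x with h1 | h1 <;> omega

lemma self_mem_Sset {u v : α} (h : G.Adj u v) : u ∈ Sset G u v := by
  rw [mem_Sset hc hac h]
  have h1 : G.dist u v = 1 := SimpleGraph.dist_eq_one_iff_adj.mpr h
  rw [SimpleGraph.dist_self]; omega

lemma other_not_mem_Sset {u v : α} (h : G.Adj u v) : v ∉ Sset G u v := by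
  rw [not_mem_Sset hc hac h]
  exact self_mem_Sset hc hac h.symm

lemma Sset_subset {u v w : α} (huv : G.Adj u v) (hwu : G.Adj w u) (hne : w ≠ v) :
    Sset G w u ⊆ Sset G u v := by
  intro x hx
  rw [mem_Sset hc hac hwu] at hx
  have hxu : x ≠ u := by
    intro e; subst e
    have : G.dist x w = G.dist w x := SimpleGraph.dist_comm
    rw [SimpleGraph.dist_self] at hx
    omega
  rw [mem_Sset hc hac huv]
  rcases adj_cases hc hac huv x with h1 | h1
  · exact h1
  · exact absurd (closer_unique hc hac hwu huv.symm hx h1) hne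

lemma Sset_disj {u w w' : α} (h1 : G.Adj w u) (h2 : G.Adj w' u) (hne : w ≠ w') {x : α}
    (hx : x ∈ Sset G w u) (hx' : x ∈ Sset G w' u) : False := by
  rw [mem_Sset hc hac h1] at hx
  rw [mem_Sset hc hac h2] at hx'
  exact hne (closer_unique hc hac h1 h2 hx hx')

lemma exists_branch {x u : α} (h : x ≠ u) : ∃ w, G.Adj w u ∧ x ∈ Sset G w u := by
  obtain ⟨w, hadj, hd⟩ := exists_closer hc h
  exact ⟨w, hadj, (mem_Sset hc hac hadj).mpr hd⟩

private lemma cross_step {c w w' a b : α} (h1 : G.Adj w c) (h2 : G.Adj w' c) (hne : w ≠ w')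
    (ha : a ∈ Sset G w c) (hb : b ∈ Sset G w' c) (hab : G.Adj a b)
    (hcase : G.dist a c + 1 = G.dist b c) : False := by
  rw [mem_Sset hc hac h1] at ha
  have hstep1 : G.dist b w ≤ G.dist a w + 1 := by
    calc G.dist b w ≤ G.dist b a + G.dist a w := hc.dist_triangle
      _ ≤ G.dist a w + 1 := by
          have : G.dist b a = 1 := SimpleGraph.dist_eq_one_iff_adj.mpr hab.symm
          omega
  have hstep2 : G.dist b c ≤ G.dist b w + 1 := by
    calc G.dist b c ≤ G.dist b w + G.dist w c := hc.dist_triangle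
      _ ≤ G.dist b w + 1 := by
          have : G.dist w c = 1 := SimpleGraph.dist_eq_one_iff_adj.mpr h1
          omega
  have hbw : b ∈ Sset G w c := by
    rw [mem_Sset hc hac h1]; omega
  exact Sset_disj hc hac h1 h2 hne hbw hb

lemma cross_not_adj {c w w' a b : α} (h1 : G.Adj w c) (h2 : G.Adj w' c) (hne : w ≠ w')
    (ha : a ∈ Sset G w c) (hb : b ∈ Sset G w' c) : ¬ G.Adj a b := by
  intro hab
  rcases adj_cases hc hac hab c with hca | hca
  · rw [SimpleGraph.dist_comm (u := c) (v := a), SimpleGraph.dist_comm (u := c) (v := b)] at hca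
    exact cross_step hc hac h1 h2 hne ha hb hab hca
  · rw [SimpleGraph.dist_comm (u := c) (v := a), SimpleGraph.dist_comm (u := c) (v := b)] at hca
    exact cross_step hc hac h2 h1 (Ne.symm hne) hb ha hab.symm hca

lemma branch_adj {c w u x : α} (hwc : G.Adj w c) (hu : u ∈ Sset G w c) (hx : G.Adj x u) :
    x ∈ Sset G w c ∨ (x = c ∧ u = w) := by
  by_cases hxc : x = c
  · subst hxc
    right
    refine ⟨rfl, ?_⟩
    have hd1 : G.dist u x = 1 := SimpleGraph.dist_eq_one_iff_adj.mpr hx.symm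
    rw [mem_Sset hc hac hwc] at hu
    have : G.dist u w = 0 := by omega
    exact (hc.dist_eq_zero_iff).mp this
  · obtain ⟨w', hw', hxw'⟩ := exists_branch hc hac hxc
    by_cases hww : w' = w
    · subst hww; exact Or.inl hxw'
    · exact absurd hx.symm (cross_not_adj hc hac hwc hw' (Ne.symm hww) hu hxw')

end Tree2

section Bip
variable {V F : Type*} [Fintype V] [Fintype F]

/-- The bipartite factor graph. -/
def BG (E : V → F → Prop) : SimpleGraph (V ⊕ F) :=
  SimpleGraph.fromRel (fun x y : V ⊕ F => ∃ (i : V) (r : F), x = Sum.inl i ∧ y = Sum.inr r ∧ E i r)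

variable {E : V → F → Prop}

lemma adj_inl_inr {i : V} {r : F} : (BG E).Adj (Sum.inl i) (Sum.inr r) ↔ E i r := by
  simp [BG, SimpleGraph.fromRel_adj]

lemma adj_inr_inl {i : V} {r : F} : (BG E).Adj (Sum.inr r) (Sum.inl i) ↔ E i r := by
  simp [BG, SimpleGraph.fromRel_adj]

lemma adj_to_inr {x : V ⊕ F} {r : F} (h : (BG E).Adj x (Sum.inr r)) :
    ∃ j : V, x = Sum.inl j ∧ E j r := by
  rcases h with ⟨hne, h | h⟩
  · obtain ⟨i, r', hx, hy, hE⟩ := h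
    rw [Sum.inr.injEq] at hy
    exact ⟨i, hx, hy ▸ hE⟩
  · obtain ⟨i, r', hx, hy, hE⟩ := h
    exact absurd hx (by simp)

lemma adj_to_inl {x : V ⊕ F} {i : V} (h : (BG E).Adj x (Sum.inl i)) :
    ∃ s : F, x = Sum.inr s ∧ E i s := by
  rcases h with ⟨hne, h | h⟩
  · obtain ⟨i', r', hx, hy, hE⟩ := h
    exact absurd hy (by simp)
  · obtain ⟨i', r', hy, hx, hE⟩ := h
    rw [Sum.inl.injEq] at hy
    exact ⟨r', hx, hy ▸ hE⟩

set_option linter.unusedSectionVars false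

/-- neighbourhood of a factor -/
noncomputable def nbF (E : V → F → Prop) (r : F) : Finset V := univ.filter (fun j => E j r)
/-- neighbourhood of a variable -/
noncomputable def nbV (E : V → F → Prop) (i : V) : Finset F := univ.filter (fun s => E i s)

variable (hc : (BG E).Connected) (hac : (BG E).IsAcyclic)
include hc hac

lemma Id1 {r : F} {i : V} (h : E i r) :
    Sset (BG E) (Sum.inr r) (Sum.inl i)
      = insert (Sum.inr r)
        (((nbF E r).erase i).biUnion (fun j => Sset (BG E) (Sum.inl j) (Sum.inr r))) := by
  have hri : (BG E).Adj (Sum.inr r) (Sum.inl i) := adj_inr_inl.mpr h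
  ext x
  simp only [mem_insert, mem_biUnion, mem_erase, nbF, mem_filter, mem_univ, true_and]
  constructor
  · intro hx
    by_cases hxr : x = Sum.inr r
    · exact Or.inl hxr
    · obtain ⟨w, hw, hxw⟩ := exists_branch hc hac hxr
      obtain ⟨j, hj, hjE⟩ := adj_to_inr hw
      subst hj
      refine Or.inr ⟨j, ⟨?_, hjE⟩, hxw⟩
      intro e; subst e
      exact ((not_mem_Sset hc hac hri).mpr hxw) hx
  · rintro (hx | ⟨j, ⟨hji, hjE⟩, hx⟩)
    · subst hx; exact self_mem_Sset hc hac hri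
    · exact Sset_subset hc hac hri (adj_inl_inr.mpr hjE) (by simp [hji]) hx

lemma Id2 (r : F) :
    (univ : Finset (V ⊕ F)) = insert (Sum.inr r)
        ((nbF E r).biUnion (fun j => Sset (BG E) (Sum.inl j) (Sum.inr r))) := by
  ext x
  simp only [mem_univ, true_iff, mem_insert, mem_biUnion, nbF, mem_filter, mem_univ, true_and]
  by_cases hxr : x = Sum.inr r
  · exact Or.inl hxr
  · obtain ⟨w, hw, hxw⟩ := exists_branch hc hac hxr
    obtain ⟨j, hj, hjE⟩ := adj_to_inr hw
    subst hj
    exact Or.inr ⟨j, hjE, hxw⟩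

lemma Id3 {j : V} {r : F} (h : E j r) :
    Sset (BG E) (Sum.inl j) (Sum.inr r)
      = insert (Sum.inl j)
        (((nbV E j).erase r).biUnion (fun s => Sset (BG E) (Sum.inr s) (Sum.inl j))) := by
  have hjr : (BG E).Adj (Sum.inl j) (Sum.inr r) := adj_inl_inr.mpr h
  ext x
  simp only [mem_insert, mem_biUnion, mem_erase, nbV, mem_filter, mem_univ, true_and]
  constructor
  · intro hx
    by_cases hxj : x = Sum.inl j
    · exact Or.inl hxj
    · obtain ⟨w, hw, hxw⟩ := exists_branch hc hac hxj
      obtain ⟨s, hs, hsE⟩ := adj_to_inl hw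
      subst hs
      refine Or.inr ⟨s, ⟨?_, hsE⟩, hxw⟩
      intro e; subst e
      exact ((not_mem_Sset hc hac hjr).mpr hxw) hx
  · rintro (hx | ⟨s, ⟨hsr, hsE⟩, hx⟩)
    · subst hx; exact self_mem_Sset hc hac hjr
    · exact Sset_subset hc hac hjr (adj_inr_inl.mpr hsE) (by simp [hsr]) hx

lemma Id4 (i : V) :
    (univ : Finset (V ⊕ F)) = insert (Sum.inl i)
        ((nbV E i).biUnion (fun s => Sset (BG E) (Sum.inr s) (Sum.inl i))) := by
  ext x
  simp only [mem_univ, true_iff, mem_insert, mem_biUnion, nbV, mem_filter, mem_univ, true_and]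
  by_cases hxi : x = Sum.inl i
  · exact Or.inl hxi
  · obtain ⟨w, hw, hxw⟩ := exists_branch hc hac hxi
    obtain ⟨s, hs, hsE⟩ := adj_to_inl hw
    subst hs
    exact Or.inr ⟨s, hsE, hxw⟩

end Bip

section Pack
variable {V F : Type*} [Fintype V] [Fintype F] {E : V → F → Prop}

/-- `T` is a valid partial packing supported inside the vertex set `A`. -/
def packOK (E : V → F → Prop) (A : Finset (V ⊕ F)) (T : Finset V) : Prop :=
  (∀ j ∈ T, Sum.inl j ∈ A) ∧ ∀ s : F, Sum.inr s ∈ A → (T.filter fun j => E j s).card ≤ 1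

noncomputable def pks (E : V → F → Prop) (A : Finset (V ⊕ F)) (P : Finset V → Prop) : ℕ :=
  (univ.filter fun T : Finset V => packOK E A T ∧ P T).sup Finset.card

lemma le_pks {A : Finset (V ⊕ F)} {T : Finset V} {P : Finset V → Prop}
    (h1 : packOK E A T) (h2 : P T) : T.card ≤ pks E A P :=
  Finset.le_sup (by simp only [mem_filter, mem_univ, true_and]; exact ⟨h1, h2⟩)

lemma packOK_empty (A : Finset (V ⊕ F)) : packOK E A ∅ := by
  constructor
  · intro j hj; simp at hj
  · intro s _; simp

lemma pks_exists {A : Finset (V ⊕ F)} {P : Finset V → Prop} (hP : P ∅) :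
    ∃ T, packOK E A T ∧ P T ∧ T.card = pks E A P := by
  have hne : (univ.filter fun T : Finset V => packOK E A T ∧ P T).Nonempty :=
    ⟨∅, by simp only [mem_filter, mem_univ, true_and]; exact ⟨packOK_empty A, hP⟩⟩
  obtain ⟨T, hT, hT2⟩ := Finset.exists_mem_eq_sup _ hne Finset.card
  simp only [mem_filter, mem_univ, true_and] at hT
  exact ⟨T, hT.1, hT.2, hT2.symm⟩

lemma pks_mono {A : Finset (V ⊕ F)} {P Q : Finset V → Prop} (h : ∀ T, P T → Q T) :
    pks E A P ≤ pks E A Q := by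
  apply Finset.sup_le
  intro T hT
  simp only [mem_filter, mem_univ, true_and] at hT
  exact le_pks hT.1 (h T hT.2)

/-- maximal packing inside `A` -/
noncomputable def pk (E : V → F → Prop) (A : Finset (V ⊕ F)) : ℕ := pks E A (fun _ => True)
/-- maximal packing inside `A` avoiding the variable `j` -/
noncomputable def pkN (E : V → F → Prop) (A : Finset (V ⊕ F)) (j : V) : ℕ :=
  pks E A (fun T => j ∉ T)
/-- maximal packing inside `A` leaving the factor `r` unoccupied -/
noncomputable def pk0 (E : V → F → Prop) (A : Finset (V ⊕ F)) (r : F) : ℕ :=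
  pks E A (fun T => ∀ j ∈ T, ¬ E j r)

lemma pkN_le_pk {A : Finset (V ⊕ F)} {j : V} : pkN E A j ≤ pk E A :=
  pks_mono (fun _ _ => trivial)

lemma pk0_le_pk {A : Finset (V ⊕ F)} {r : F} : pk0 E A r ≤ pk E A :=
  pks_mono (fun _ _ => trivial)

end Pack

section FD
variable {V F : Type*} [Fintype V] [Fintype F] {E : V → F → Prop}
variable (hc : (BG E).Connected) (hac : (BG E).IsAcyclic)
include hc hac

lemma FD {r : F} {J : Finset V} (hJ : ∀ j ∈ J, E j r) :
    pk0 E (insert (Sum.inr r) (J.biUnion fun j => Sset (BG E) (Sum.inl j) (Sum.inr r))) r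
      = (∑ j ∈ J, pkN E (Sset (BG E) (Sum.inl j) (Sum.inr r)) j) ∧
    pk E (insert (Sum.inr r) (J.biUnion fun j => Sset (BG E) (Sum.inl j) (Sum.inr r)))
      = pk0 E (insert (Sum.inr r) (J.biUnion fun j => Sset (BG E) (Sum.inl j) (Sum.inr r))) r
        + J.sup (fun j => pk E (Sset (BG E) (Sum.inl j) (Sum.inr r))
            - pkN E (Sset (BG E) (Sum.inl j) (Sum.inr r)) j) := by
  set Bj : V → Finset (V ⊕ F) := fun j => Sset (BG E) (Sum.inl j) (Sum.inr r) with hBj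
  set A : Finset (V ⊕ F) := insert (Sum.inr r) (J.biUnion Bj) with hA
  have hadj : ∀ j ∈ J, (BG E).Adj (Sum.inl j) (Sum.inr r) := fun j hj => adj_inl_inr.mpr (hJ j hj)
  have hdisjB : ∀ {j j' : V}, j ∈ J → j' ∈ J → j ≠ j' → ∀ {x}, x ∈ Bj j → x ∈ Bj j' → False := by
    intro j j' hj hj' hne x hx hx'
    exact Sset_disj hc hac (hadj j hj) (hadj j' hj') (by simp [hne]) hx hx'
  have hvarA : ∀ x : V, (Sum.inl x ∈ A ↔ ∃ j ∈ J, Sum.inl x ∈ Bj j) := by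
    intro x; simp [hA]
  have hfacA : ∀ s : F, (Sum.inr s ∈ A ↔ s = r ∨ ∃ j ∈ J, Sum.inr s ∈ Bj j) := by
    intro s; simp [hA]
  have htop : ∀ {j x}, j ∈ J → Sum.inl x ∈ Bj j → E x r → x = j := by
    intro j x hj hx hE
    rw [hBj] at hx
    simp only at hx
    rw [mem_Sset hc hac (hadj j hj)] at hx
    have h1 : (BG E).dist (Sum.inl x) (Sum.inr r) = 1 :=
      SimpleGraph.dist_eq_one_iff_adj.mpr (adj_inl_inr.mpr hE)
    have h0 : (BG E).dist (Sum.inl x) (Sum.inl j) = 0 := by omega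
    exact Sum.inl_injective ((hc.dist_eq_zero_iff).mp h0)
  have hclosed : ∀ {j s x}, j ∈ J → Sum.inr s ∈ Bj j → E x s → Sum.inl x ∈ Bj j := by
    intro j s x hj hs hE
    rcases branch_adj hc hac (hadj j hj) hs (adj_inl_inr.mpr hE) with h | h
    · exact h
    · exact absurd h.1 (by simp)
  -- splitting a packing of A into branch packings
  have hsplit : ∀ T : Finset V, packOK E A T →
      T.card = (∑ j ∈ J, (T.filter fun x => Sum.inl x ∈ Bj j).card) ∧
      (∀ j ∈ J, packOK E (Bj j) (T.filter fun x => Sum.inl x ∈ Bj j)) := by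
    intro T hT
    have hTsub : T = J.biUnion (fun j => T.filter fun x => Sum.inl x ∈ Bj j) := by
      ext x
      simp only [mem_biUnion, mem_filter]
      constructor
      · intro hx
        obtain ⟨j, hj, hxB⟩ := (hvarA x).mp (hT.1 x hx)
        exact ⟨j, hj, hx, hxB⟩
      · rintro ⟨j, hj, hx, _⟩; exact hx
    constructor
    · conv_lhs => rw [hTsub]
      apply Finset.card_biUnion
      intro j hj j' hj' hne
      rw [Function.onFun, Finset.disjoint_left]
      intro x hx hx'
      simp only [mem_filter] at hx hx'
      exact hdisjB hj hj' hne hx.2 hx'.2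
    · intro j hj
      constructor
      · intro x hx; exact (mem_filter.mp hx).2
      · intro s hs
        calc ((T.filter fun x => Sum.inl x ∈ Bj j).filter fun x => E x s).card
            ≤ (T.filter fun x => E x s).card := by
              apply Finset.card_le_card
              intro x hx
              simp only [mem_filter] at hx ⊢
              exact ⟨hx.1.1, hx.2⟩
          _ ≤ 1 := hT.2 s ((hfacA s).mpr (Or.inr ⟨j, hj, hs⟩))
  -- combining branch packings into a packing of A
  have hcomb : ∀ Tf : V → Finset V, (∀ j ∈ J, packOK E (Bj j) (Tf j)) →
      (∀ j ∈ J, ∀ j' ∈ J, j ∈ Tf j → j' ∈ Tf j' → j = j') →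
      packOK E A (J.biUnion Tf) ∧ (J.biUnion Tf).card = (∑ j ∈ J, (Tf j).card) ∧
        (∀ x ∈ J.biUnion Tf, E x r → ∃ j ∈ J, x = j ∧ j ∈ Tf j) := by
    intro Tf hTf hone
    have hmem : ∀ {x j}, j ∈ J → x ∈ Tf j → Sum.inl x ∈ Bj j := fun {x j} hj hx => (hTf j hj).1 x hx
    have htops : ∀ x ∈ J.biUnion Tf, E x r → ∃ j ∈ J, x = j ∧ j ∈ Tf j := by
      intro x hx hE
      obtain ⟨j, hj, hxj⟩ := mem_biUnion.mp hx
      have hxeq := htop hj (hmem hj hxj) hE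
      exact ⟨j, hj, hxeq, hxeq ▸ hxj⟩
    refine ⟨⟨?_, ?_⟩, ?_, htops⟩
    · intro x hx
      obtain ⟨j, hj, hxj⟩ := mem_biUnion.mp hx
      exact (hvarA x).mpr ⟨j, hj, hmem hj hxj⟩
    · intro s hs
      rcases (hfacA s).mp hs with rfl | ⟨j₀, hj₀, hsB⟩
      · apply Finset.card_le_one.mpr
        intro a ha b hb
        simp only [mem_filter] at ha hb
        obtain ⟨ja, hja, hae, hja2⟩ := htops a ha.1 ha.2
        obtain ⟨jb, hjb, hbe, hjb2⟩ := htops b hb.1 hb.2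
        rw [hae, hbe]
        exact hone ja hja jb hjb hja2 hjb2
      · have hsubf : (J.biUnion Tf).filter (fun x => E x s) ⊆ (Tf j₀).filter (fun x => E x s) := by
          intro x hx
          simp only [mem_filter, mem_biUnion] at hx ⊢
          obtain ⟨⟨j, hj, hxj⟩, hE⟩ := hx
          have hxB : Sum.inl x ∈ Bj j₀ := hclosed hj₀ hsB hE
          by_cases hjj : j = j₀
          · exact ⟨hjj ▸ hxj, hE⟩
          · exact absurd hxB (fun h => hdisjB hj hj₀ hjj (hmem hj hxj) h)
        exact le_trans (Finset.card_le_card hsubf) ((hTf j₀ hj₀).2 s hsB)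
    · apply Finset.card_biUnion
      intro j hj j' hj' hne
      rw [Function.onFun, Finset.disjoint_left]
      intro x hx hx'
      exact hdisjB hj hj' hne (hmem hj hx) (hmem hj' hx')
  have hFD1 : pk0 E A r = ∑ j ∈ J, pkN E (Bj j) j := by
    apply le_antisymm
    · obtain ⟨T, hT, hT0, hTc⟩ :=
        pks_exists (E := E) (A := A) (P := fun T => ∀ j ∈ T, ¬ E j r) (by simp)
      rw [pk0, ← hTc]
      obtain ⟨hcard, hpack⟩ := hsplit T hT
      rw [hcard]
      apply Finset.sum_le_sum
      intro j hj
      apply le_pks (hpack j hj)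
      intro hjT
      exact hT0 j (mem_filter.mp hjT).1 (hJ j hj)
    · have hch : ∀ j, j ∈ J → ∃ Tj, packOK E (Bj j) Tj ∧ j ∉ Tj ∧ Tj.card = pkN E (Bj j) j :=
        fun j _ => pks_exists (by simp)
      choose! Tf hTf1 hTf2 hTf3 using hch
      obtain ⟨hpackA, hcard, htops⟩ :=
        hcomb Tf hTf1 (fun j hj j' hj' hjj hjj' => absurd hjj (hTf2 j hj))
      have hval : (∑ j ∈ J, pkN E (Bj j) j) = (J.biUnion Tf).card := by
        rw [hcard]
        exact Finset.sum_congr rfl (fun j hj => (hTf3 j hj).symm)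
      rw [hval]
      apply le_pks hpackA
      intro x hx hE
      obtain ⟨j, hj, hxe, hjT⟩ := htops x hx hE
      exact hTf2 j hj (hxe ▸ hjT)
  have hFD2 : pk E A = pk0 E A r + J.sup (fun j => pk E (Bj j) - pkN E (Bj j) j) := by
    apply le_antisymm
    · obtain ⟨T, hT, _, hTc⟩ := pks_exists (E := E) (A := A) (P := fun _ => True) trivial
      rw [pk, ← hTc]
      obtain ⟨hcard, hpack⟩ := hsplit T hT
      by_cases hex : ∃ j₀, j₀ ∈ J ∧ j₀ ∈ T
      · obtain ⟨j₀, hj₀, hj₀T⟩ := hex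
        have hr : (T.filter fun x => E x r).card ≤ 1 := hT.2 r (by simp [hA])
        have honly : ∀ j ∈ J, j ∈ T → j = j₀ := by
          intro j hj hjT
          exact Finset.card_le_one.mp hr j (mem_filter.mpr ⟨hjT, hJ j hj⟩) j₀
            (mem_filter.mpr ⟨hj₀T, hJ j₀ hj₀⟩)
        have hbound : ∀ j ∈ J.erase j₀, (T.filter fun x => Sum.inl x ∈ Bj j).card ≤ pkN E (Bj j) j := by
          intro j hj
          rw [mem_erase] at hj
          apply le_pks (hpack j hj.2)
          intro hjm
          exact hj.1 (honly j hj.2 (mem_filter.mp hjm).1)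
        have hbound0 : (T.filter fun x => Sum.inl x ∈ Bj j₀).card ≤ pk E (Bj j₀) :=
          le_pks (hpack j₀ hj₀) trivial
        have hsum : T.card = (T.filter fun x => Sum.inl x ∈ Bj j₀).card
            + ∑ j ∈ J.erase j₀, (T.filter fun x => Sum.inl x ∈ Bj j).card := by
          rw [hcard, ← Finset.add_sum_erase J (fun j => (T.filter fun x => Sum.inl x ∈ Bj j).card) hj₀]
        have hesum : pkN E (Bj j₀) j₀ + ∑ j ∈ J.erase j₀, pkN E (Bj j) j
            = ∑ j ∈ J, pkN E (Bj j) j :=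
          Finset.add_sum_erase J (fun j => pkN E (Bj j) j) hj₀
        have hle : pk E (Bj j₀) - pkN E (Bj j₀) j₀ ≤ J.sup (fun j => pk E (Bj j) - pkN E (Bj j) j) :=
          Finset.le_sup (f := fun j => pk E (Bj j) - pkN E (Bj j) j) hj₀
        have hNle : pkN E (Bj j₀) j₀ ≤ pk E (Bj j₀) := pkN_le_pk
        have herase : ∑ j ∈ J.erase j₀, (T.filter fun x => Sum.inl x ∈ Bj j).card
            ≤ ∑ j ∈ J.erase j₀, pkN E (Bj j) j := Finset.sum_le_sum hbound
        rw [hFD1]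
        omega
      · push_neg at hex
        have hb : ∀ j ∈ J, (T.filter fun x => Sum.inl x ∈ Bj j).card ≤ pkN E (Bj j) j := by
          intro j hj
          apply le_pks (hpack j hj)
          intro hjm
          exact hex j hj (mem_filter.mp hjm).1
        have := Finset.sum_le_sum hb
        rw [hFD1]
        omega
    · rcases Finset.eq_empty_or_nonempty J with rfl | hne
      · simpa using pk0_le_pk
      · obtain ⟨j₀, hj₀, hsup⟩ :=
          Finset.exists_mem_eq_sup J hne (fun j => pk E (Bj j) - pkN E (Bj j) j)
        obtain ⟨T0, hT01, _, hT03⟩ :=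
          pks_exists (E := E) (A := Bj j₀) (P := fun _ => True) trivial
        have hch : ∀ j, j ∈ J.erase j₀ → ∃ Tj, packOK E (Bj j) Tj ∧ j ∉ Tj ∧ Tj.card = pkN E (Bj j) j :=
          fun j _ => pks_exists (by simp)
        choose! TfN hTfN1 hTfN2 hTfN3 using hch
        set Tf : V → Finset V := fun j => if j = j₀ then T0 else TfN j with hTf
        have hTfpack : ∀ j ∈ J, packOK E (Bj j) (Tf j) := by
          intro j hj
          by_cases hjj : j = j₀
          · subst hjj; simp only [hTf, if_pos rfl]; exact hT01
          · simp only [hTf, if_neg hjj]; exact hTfN1 j (mem_erase.mpr ⟨hjj, hj⟩)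
        have hone : ∀ j ∈ J, ∀ j' ∈ J, j ∈ Tf j → j' ∈ Tf j' → j = j' := by
          intro j hj j' hj' hjj hjj'
          by_cases h1 : j = j₀
          · by_cases h2 : j' = j₀
            · rw [h1, h2]
            · simp only [hTf, if_neg h2] at hjj'
              exact absurd hjj' (hTfN2 j' (mem_erase.mpr ⟨h2, hj'⟩))
          · simp only [hTf, if_neg h1] at hjj
            exact absurd hjj (hTfN2 j (mem_erase.mpr ⟨h1, hj⟩))
        obtain ⟨hpackA, hcard, _⟩ := hcomb Tf hTfpack hone
        have hval : (J.biUnion Tf).card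
            = pk E (Bj j₀) + ∑ j ∈ J.erase j₀, pkN E (Bj j) j := by
          rw [hcard, ← Finset.add_sum_erase J (fun j => (Tf j).card) hj₀]
          congr 1
          · simp only [hTf, if_pos rfl]; exact hT03
          · apply Finset.sum_congr rfl
            intro j hj
            rw [mem_erase] at hj
            simp only [hTf, if_neg hj.1]
            exact hTfN3 j (mem_erase.mpr hj)
        have hfin : T0.card = pk E (Bj j₀) := hT03
        have hNle : pkN E (Bj j₀) j₀ ≤ pk E (Bj j₀) := pkN_le_pk
        have hesum : pkN E (Bj j₀) j₀ + ∑ j ∈ J.erase j₀, pkN E (Bj j) j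
            = ∑ j ∈ J, pkN E (Bj j) j :=
          Finset.add_sum_erase J (fun j => pkN E (Bj j) j) hj₀
        have hle2 : (J.biUnion Tf).card ≤ pk E A := le_pks hpackA trivial
        rw [hFD1, hsup]
        omega
  exact ⟨hFD1, hFD2⟩

end FD

section VD
variable {V F : Type*} [Fintype V] [Fintype F] {E : V → F → Prop}
variable (hc : (BG E).Connected) (hac : (BG E).IsAcyclic)
include hc hac

lemma VD {i : V} {K : Finset F} (hK : ∀ s ∈ K, E i s) :
    pkN E (insert (Sum.inl i) (K.biUnion fun s => Sset (BG E) (Sum.inr s) (Sum.inl i))) i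
      = (∑ s ∈ K, pk E (Sset (BG E) (Sum.inr s) (Sum.inl i))) ∧
    pk E (insert (Sum.inl i) (K.biUnion fun s => Sset (BG E) (Sum.inr s) (Sum.inl i)))
      = max (∑ s ∈ K, pk E (Sset (BG E) (Sum.inr s) (Sum.inl i)))
          (1 + ∑ s ∈ K, pk0 E (Sset (BG E) (Sum.inr s) (Sum.inl i)) s) := by
  set As : F → Finset (V ⊕ F) := fun s => Sset (BG E) (Sum.inr s) (Sum.inl i) with hAs
  set B : Finset (V ⊕ F) := insert (Sum.inl i) (K.biUnion As) with hB
  have hadj : ∀ s ∈ K, (BG E).Adj (Sum.inr s) (Sum.inl i) := fun s hs => adj_inr_inl.mpr (hK s hs)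
  have hdisjB : ∀ {s s' : F}, s ∈ K → s' ∈ K → s ≠ s' → ∀ {x}, x ∈ As s → x ∈ As s' → False := by
    intro s s' hs hs' hne x hx hx'
    exact Sset_disj hc hac (hadj s hs) (hadj s' hs') (by simp [hne]) hx hx'
  have hvarB : ∀ x : V, (Sum.inl x ∈ B ↔ x = i ∨ ∃ s ∈ K, Sum.inl x ∈ As s) := by
    intro x; simp [hB]
  have hfacB : ∀ u : F, (Sum.inr u ∈ B ↔ ∃ s ∈ K, Sum.inr u ∈ As s) := by
    intro u; simp [hB]
  have hinot : ∀ s ∈ K, Sum.inl i ∉ As s := fun s hs => other_not_mem_Sset hc hac (hadj s hs)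
  have hself : ∀ s ∈ K, Sum.inr s ∈ As s := fun s hs => self_mem_Sset hc hac (hadj s hs)
  have hclass : ∀ {s u : F} {x : V}, s ∈ K → Sum.inr u ∈ As s → E x u →
      Sum.inl x ∈ As s ∨ (x = i ∧ u = s) := by
    intro s u x hs hu hE
    rcases branch_adj hc hac (hadj s hs) hu (adj_inl_inr.mpr hE) with h | h
    · exact Or.inl h
    · exact Or.inr ⟨Sum.inl_injective h.1, Sum.inr_injective h.2⟩
  have hsplit : ∀ T : Finset V, packOK E B T →
      ((T.erase i).card = ∑ s ∈ K, (T.filter fun x => Sum.inl x ∈ As s).card) ∧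
      (∀ s ∈ K, packOK E (As s) (T.filter fun x => Sum.inl x ∈ As s)) ∧
      (i ∈ T → ∀ s ∈ K, ∀ x ∈ T.filter fun x => Sum.inl x ∈ As s, ¬ E x s) := by
    intro T hT
    have hTsub : T.erase i = K.biUnion (fun s => T.filter fun x => Sum.inl x ∈ As s) := by
      ext x
      simp only [mem_erase, mem_biUnion, mem_filter]
      constructor
      · rintro ⟨hxi, hx⟩
        rcases (hvarB x).mp (hT.1 x hx) with h | ⟨s, hs, hxs⟩
        · exact absurd h hxi
        · exact ⟨s, hs, hx, hxs⟩
      · rintro ⟨s, hs, hx, hxs⟩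
        refine ⟨?_, hx⟩
        intro e; subst e; exact hinot s hs hxs
    refine ⟨?_, ?_, ?_⟩
    · rw [hTsub]
      apply Finset.card_biUnion
      intro s hs s' hs' hne
      rw [Function.onFun, Finset.disjoint_left]
      intro x hx hx'
      simp only [mem_filter] at hx hx'
      exact hdisjB hs hs' hne hx.2 hx'.2
    · intro s hs
      constructor
      · intro x hx; exact (mem_filter.mp hx).2
      · intro u hu
        calc ((T.filter fun x => Sum.inl x ∈ As s).filter fun x => E x u).card
            ≤ (T.filter fun x => E x u).card := by
              apply Finset.card_le_card
              intro x hx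
              simp only [mem_filter] at hx ⊢
              exact ⟨hx.1.1, hx.2⟩
          _ ≤ 1 := hT.2 u ((hfacB u).mpr ⟨s, hs, hu⟩)
    · intro hiT s hs x hx hE
      have hcon := hT.2 s ((hfacB s).mpr ⟨s, hs, hself s hs⟩)
      have hxi : x ≠ i := by
        intro e; subst e; exact hinot s hs (mem_filter.mp hx).2
      exact hxi (Finset.card_le_one.mp hcon x
        (mem_filter.mpr ⟨(mem_filter.mp hx).1, hE⟩) i (mem_filter.mpr ⟨hiT, hK s hs⟩))
  have hcomb0 : ∀ Tf : F → Finset V, (∀ s ∈ K, packOK E (As s) (Tf s)) →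
      packOK E B (K.biUnion Tf) ∧ (K.biUnion Tf).card = (∑ s ∈ K, (Tf s).card)
        ∧ i ∉ K.biUnion Tf := by
    intro Tf hTf
    have hmem : ∀ {x s}, s ∈ K → x ∈ Tf s → Sum.inl x ∈ As s :=
      fun {x s} hs hx => (hTf s hs).1 x hx
    have hinotT : i ∉ K.biUnion Tf := by
      intro h
      obtain ⟨s, hs, hxs⟩ := mem_biUnion.mp h
      exact hinot s hs (hmem hs hxs)
    refine ⟨⟨?_, ?_⟩, ?_, hinotT⟩
    · intro x hx
      obtain ⟨s, hs, hxs⟩ := mem_biUnion.mp hx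
      exact (hvarB x).mpr (Or.inr ⟨s, hs, hmem hs hxs⟩)
    · intro u hu
      obtain ⟨s₀, hs₀, huB⟩ := (hfacB u).mp hu
      have hsubf : (K.biUnion Tf).filter (fun x => E x u) ⊆ (Tf s₀).filter (fun x => E x u) := by
        intro x hx
        simp only [mem_filter, mem_biUnion] at hx ⊢
        obtain ⟨⟨s, hs, hxs⟩, hE⟩ := hx
        rcases hclass hs₀ huB hE with hxB | ⟨hxi, hus⟩
        · by_cases hss : s = s₀
          · exact ⟨hss ▸ hxs, hE⟩
          · exact absurd hxB (fun h => hdisjB hs hs₀ hss (hmem hs hxs) h)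
        · subst hxi
          exact absurd (hmem hs hxs) (hinot s hs)
      exact le_trans (Finset.card_le_card hsubf) ((hTf s₀ hs₀).2 u huB)
    · apply Finset.card_biUnion
      intro s hs s' hs' hne
      rw [Function.onFun, Finset.disjoint_left]
      intro x hx hx'
      exact hdisjB hs hs' hne (hmem hs hx) (hmem hs' hx')
  have hcomb1 : ∀ Tf : F → Finset V, (∀ s ∈ K, packOK E (As s) (Tf s)) →
      (∀ s ∈ K, ∀ x ∈ Tf s, ¬ E x s) →
      packOK E B (insert i (K.biUnion Tf)) ∧
        (insert i (K.biUnion Tf)).card = 1 + (∑ s ∈ K, (Tf s).card) := by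
    intro Tf hTf h0
    obtain ⟨⟨hv, hf⟩, hcard, hinotT⟩ := hcomb0 Tf hTf
    have hmem : ∀ {x s}, s ∈ K → x ∈ Tf s → Sum.inl x ∈ As s :=
      fun {x s} hs hx => (hTf s hs).1 x hx
    refine ⟨⟨?_, ?_⟩, ?_⟩
    · intro x hx
      rcases mem_insert.mp hx with rfl | hx2
      · exact (hvarB x).mpr (Or.inl rfl)
      · exact hv x hx2
    · intro u hu
      obtain ⟨s₀, hs₀, huB⟩ := (hfacB u).mp hu
      by_cases hEi : E i u
      · have hus : u = s₀ := by
          rcases hclass hs₀ huB hEi with h | h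
          · exact absurd h (hinot s₀ hs₀)
          · exact h.2
        subst hus
        apply Finset.card_le_one.mpr
        have haux : ∀ a ∈ (insert i (K.biUnion Tf)).filter (fun x => E x u), a = i := by
          intro a ha
          rcases mem_insert.mp (mem_filter.mp ha).1 with h | h
          · exact h
          · obtain ⟨s, hs, hxs⟩ := mem_biUnion.mp h
            have hE := (mem_filter.mp ha).2
            rcases hclass hs₀ huB hE with hxB | ⟨hxi, _⟩
            · by_cases hss : s = u
              · exact absurd hE (by rw [hss] at hxs; exact h0 u hs₀ a hxs)
              · exact absurd hxB (fun hh => hdisjB hs hs₀ hss (hmem hs hxs) hh)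
            · subst hxi
              exact absurd (hmem hs hxs) (hinot s hs)
        intro a ha b hb
        rw [haux a ha, haux b hb]
      · have heq : (insert i (K.biUnion Tf)).filter (fun x => E x u)
            = (K.biUnion Tf).filter (fun x => E x u) := by
          ext x
          simp only [mem_filter, mem_insert]
          constructor
          · rintro ⟨rfl | hx, hE⟩
            · exact absurd hE hEi
            · exact ⟨hx, hE⟩
          · rintro ⟨hx, hE⟩
            exact ⟨Or.inr hx, hE⟩
        rw [heq]
        exact hf u hu
    · rw [Finset.card_insert_of_notMem hinotT, hcard]
      omega
  have hVD1 : pkN E B i = ∑ s ∈ K, pk E (As s) := by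
    apply le_antisymm
    · obtain ⟨T, hT, hTi, hTc⟩ :=
        pks_exists (E := E) (A := B) (P := fun T => i ∉ T) (by simp)
      rw [pkN, ← hTc]
      obtain ⟨hcard, hpack, _⟩ := hsplit T hT
      rw [Finset.erase_eq_of_notMem hTi] at hcard
      rw [hcard]
      apply Finset.sum_le_sum
      intro s hs
      exact le_pks (hpack s hs) trivial
    · have hch : ∀ s, s ∈ K → ∃ Ts, packOK E (As s) Ts ∧ True ∧ Ts.card = pk E (As s) :=
        fun s _ => pks_exists trivial
      choose! Tf hTf1 _ hTf3 using hch
      obtain ⟨hpackB, hcard, hinotT⟩ := hcomb0 Tf hTf1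
      have hval : (∑ s ∈ K, pk E (As s)) = (K.biUnion Tf).card := by
        rw [hcard]
        exact Finset.sum_congr rfl (fun s hs => (hTf3 s hs).symm)
      rw [hval]
      exact le_pks hpackB hinotT
  have hVD2 : pk E B = max (∑ s ∈ K, pk E (As s)) (1 + ∑ s ∈ K, pk0 E (As s) s) := by
    apply le_antisymm
    · obtain ⟨T, hT, _, hTc⟩ := pks_exists (E := E) (A := B) (P := fun _ => True) trivial
      rw [pk, ← hTc]
      obtain ⟨hcard, hpack, h0c⟩ := hsplit T hT
      by_cases hiT : i ∈ T
      · have hc1 : T.card = (T.erase i).card + 1 := (Finset.card_erase_add_one hiT).symm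
        have hb : ∀ s ∈ K, (T.filter fun x => Sum.inl x ∈ As s).card ≤ pk0 E (As s) s := by
          intro s hs
          exact le_pks (hpack s hs) (h0c hiT s hs)
        have hsum := Finset.sum_le_sum hb
        have : T.card ≤ 1 + ∑ s ∈ K, pk0 E (As s) s := by omega
        exact le_trans this (le_max_right _ _)
      · have : T.card ≤ pkN E B i := le_pks hT hiT
        rw [hVD1] at this
        exact le_trans this (le_max_left _ _)
    · apply max_le
      · rw [← hVD1]
        exact pkN_le_pk
      · have hch : ∀ s, s ∈ K → ∃ Ts, packOK E (As s) Ts ∧ (∀ x ∈ Ts, ¬ E x s) ∧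
            Ts.card = pk0 E (As s) s := fun s _ => pks_exists (by simp)
        choose! Tf hTf1 hTf2 hTf3 using hch
        obtain ⟨hpackB, hcard⟩ := hcomb1 Tf hTf1 hTf2
        have hval : 1 + (∑ s ∈ K, pk0 E (As s) s) = (insert i (K.biUnion Tf)).card := by
          rw [hcard]
          congr 1
          exact Finset.sum_congr rfl (fun s hs => (hTf3 s hs).symm)
        rw [hval]
        exact le_pks hpackB trivial
  exact ⟨hVD1, hVD2⟩

end VD

example (a x : ℕ) : max (a + x) (1 + a) - (a + x) = 1 - x := by omega

section Branch
variable {V F : Type*} [Fintype V] [Fintype F] {E : V → F → Prop}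

/-- the branch hanging from factor `s` away from variable `j` -/
noncomputable def br (E : V → F → Prop) (s : F) (j : V) : Finset (V ⊕ F) :=
  Sset (BG E) (Sum.inr s) (Sum.inl j)

/-- the occupational loss of the branch `s → j` -/
noncomputable def tN (E : V → F → Prop) (s : F) (j : V) : ℕ :=
  pk E (br E s j) - pk0 E (br E s j) s

noncomputable def xsum (E : V → F → Prop) (r : F) (j : V) : ℕ :=
  ∑ s ∈ (nbV E j).erase r, tN E s j

lemma pk_br {s : F} {j : V} : pk E (br E s j) = pk0 E (br E s j) s + tN E s j := by
  have h := pk0_le_pk (E := E) (A := br E s j) (r := s)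
  rw [tN]
  omega

variable (hc : (BG E).Connected) (hac : (BG E).IsAcyclic)
include hc hac

lemma hKmem {j : V} {r : F} : ∀ s ∈ (nbV E j).erase r, E j s := by
  intro s hs
  rw [mem_erase, nbV, mem_filter] at hs
  exact hs.2.2

lemma branch_pkN {j : V} {r : F} (hjr : E j r) :
    pkN E (Sset (BG E) (Sum.inl j) (Sum.inr r)) j
      = ∑ s ∈ (nbV E j).erase r, pk E (br E s j) := by
  rw [Id3 hc hac hjr]
  exact (VD hc hac (hKmem hc hac)).1

lemma branch_pk {j : V} {r : F} (hjr : E j r) :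
    pk E (Sset (BG E) (Sum.inl j) (Sum.inr r))
      = pkN E (Sset (BG E) (Sum.inl j) (Sum.inr r)) j + (1 - xsum E r j) := by
  have h1 := branch_pkN hc hac hjr
  have h2 : pk E (Sset (BG E) (Sum.inl j) (Sum.inr r))
      = max (∑ s ∈ (nbV E j).erase r, pk E (br E s j))
          (1 + ∑ s ∈ (nbV E j).erase r, pk0 E (br E s j) s) := by
    rw [Id3 hc hac hjr]
    exact (VD hc hac (hKmem hc hac)).2
  have h3 : ∑ s ∈ (nbV E j).erase r, pk E (br E s j)
      = (∑ s ∈ (nbV E j).erase r, pk0 E (br E s j) s) + xsum E r j := by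
    rw [xsum, ← Finset.sum_add_distrib]
    exact Finset.sum_congr rfl (fun s _ => pk_br)
  rw [h1, h2, h3, xsum]
  omega

lemma hJmem {r : F} {i : V} : ∀ j ∈ (nbF E r).erase i, E j r := by
  intro j hj
  rw [mem_erase, nbF, mem_filter] at hj
  exact hj.2.2

lemma hJmemall {r : F} : ∀ j ∈ nbF E r, E j r := by
  intro j hj
  rw [nbF, mem_filter] at hj
  exact hj.2

lemma edge_tN {r : F} {i : V} (hE : E i r) :
    tN E r i = ((nbF E r).erase i).sup (fun j => 1 - xsum E r j) ∧
    pk E (br E r i) = pk0 E (br E r i) r + ((nbF E r).erase i).sup (fun j => 1 - xsum E r j) := by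
  have hFD := FD hc hac (hJmem hc hac (r := r) (i := i))
  have hA : br E r i = insert (Sum.inr r)
      (((nbF E r).erase i).biUnion fun j => Sset (BG E) (Sum.inl j) (Sum.inr r)) :=
    Id1 hc hac hE
  have hsupeq : ((nbF E r).erase i).sup
        (fun j => pk E (Sset (BG E) (Sum.inl j) (Sum.inr r))
          - pkN E (Sset (BG E) (Sum.inl j) (Sum.inr r)) j)
      = ((nbF E r).erase i).sup (fun j => 1 - xsum E r j) := by
    apply Finset.sup_congr rfl
    intro j hj
    rw [branch_pk hc hac (hJmem hc hac j hj)]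
    omega
  have h2 : pk E (br E r i) = pk0 E (br E r i) r
      + ((nbF E r).erase i).sup (fun j => 1 - xsum E r j) := by
    rw [hA, hFD.2, hsupeq]
  refine ⟨?_, h2⟩
  rw [tN, h2]
  omega

lemma edge_tN_le {r : F} {i : V} (hE : E i r) : tN E r i ≤ 1 := by
  rw [(edge_tN hc hac hE).1]
  apply Finset.sup_le
  intro j _
  omega

lemma total_r (r : F) :
    pk E (univ : Finset (V ⊕ F)) = pk0 E (univ : Finset (V ⊕ F)) r
      + (nbF E r).sup (fun j => 1 - xsum E r j) ∧
    pk0 E (univ : Finset (V ⊕ F)) r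
      = ∑ j ∈ nbF E r, ∑ s ∈ (nbV E j).erase r, pk E (br E s j) := by
  have hFD := FD hc hac (hJmemall (hc := hc) (hac := hac) (r := r))
  have hA := Id2 (E := E) hc hac r
  have hsupeq : (nbF E r).sup
        (fun j => pk E (Sset (BG E) (Sum.inl j) (Sum.inr r))
          - pkN E (Sset (BG E) (Sum.inl j) (Sum.inr r)) j)
      = (nbF E r).sup (fun j => 1 - xsum E r j) := by
    apply Finset.sup_congr rfl
    intro j hj
    rw [branch_pk hc hac (hJmemall hc hac j hj)]
    omega
  constructor
  · rw [hA, hFD.2, hsupeq]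
  · rw [hA, hFD.1]
    exact Finset.sum_congr rfl (fun j hj => branch_pkN hc hac (hJmemall hc hac j hj))

lemma total_i (i : V) :
    pk E (univ : Finset (V ⊕ F)) = (∑ r ∈ nbV E i, pk E (br E r i))
      + (1 - ∑ r ∈ nbV E i, tN E r i) := by
  have hKm : ∀ s ∈ nbV E i, E i s := by
    intro s hs; rw [nbV, mem_filter] at hs; exact hs.2
  have hVD := VD hc hac hKm
  have hA := Id4 (E := E) hc hac i
  have h2 : pk E (univ : Finset (V ⊕ F))
      = max (∑ s ∈ nbV E i, pk E (br E s i)) (1 + ∑ s ∈ nbV E i, pk0 E (br E s i) s) := by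
    rw [hA]; exact hVD.2
  have h3 : ∑ s ∈ nbV E i, pk E (br E s i)
      = (∑ s ∈ nbV E i, pk0 E (br E s i) s) + ∑ s ∈ nbV E i, tN E s i := by
    rw [← Finset.sum_add_distrib]
    exact Finset.sum_congr rfl (fun s _ => pk_br)
  rw [h2, h3]
  omega

end Branch

section MaxHelper

lemma max'_helper {β : Type*} {J : Finset β} {f : β → ℝ} {g : β → ℕ}
    (hfg : ∀ j ∈ J, f j = 1 - (g j : ℝ)) :
    (insert (0:ℝ) (J.image f)).max' (Finset.insert_nonempty _ _)
      = ((J.sup (fun j => 1 - g j) : ℕ) : ℝ) := by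
  apply le_antisymm
  · apply Finset.max'_le
    intro y hy
    rcases Finset.mem_insert.mp hy with rfl | hy
    · exact Nat.cast_nonneg _
    · obtain ⟨j, hj, rfl⟩ := Finset.mem_image.mp hy
      rw [hfg j hj]
      have h1 : (1 : ℕ) - g j ≤ J.sup (fun j => 1 - g j) :=
        Finset.le_sup (f := fun j => 1 - g j) hj
      have h2 : (1:ℝ) - g j ≤ ((1 - g j : ℕ) : ℝ) := by
        rcases Nat.eq_zero_or_pos (g j) with h | h
        · simp [h]
        · have hge : (1:ℝ) ≤ (g j : ℝ) := by exact_mod_cast h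
          have hle0 : (1:ℝ) - g j ≤ 0 := by linarith
          exact le_trans hle0 (Nat.cast_nonneg _)
      exact le_trans h2 (by exact_mod_cast h1)
  · rcases Finset.eq_empty_or_nonempty J with rfl | hne
    · have : ((Finset.sup (∅ : Finset β) (fun j => 1 - g j) : ℕ) : ℝ) = 0 := by simp
      rw [this]
      exact Finset.le_max' _ 0 (Finset.mem_insert_self 0 _)
    · obtain ⟨j₀, hj₀, hsup⟩ := Finset.exists_mem_eq_sup J hne (fun j => 1 - g j)
      have hsup' : J.sup (fun j => 1 - g j) = 1 - g j₀ := by simpa using hsup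
      rw [hsup']
      rcases Nat.eq_zero_or_pos (g j₀) with h | h
      · have hf1 : f j₀ = 1 := by rw [hfg j₀ hj₀, h]; simp
        have : ((1 - g j₀ : ℕ) : ℝ) = f j₀ := by rw [h, hf1]; simp
        rw [this]
        exact Finset.le_max' _ _ (Finset.mem_insert_of_mem (Finset.mem_image_of_mem f hj₀))
      · have h0 : 1 - g j₀ = 0 := by omega
        rw [h0]
        exact_mod_cast Finset.le_max' _ 0 (Finset.mem_insert_self 0 _)

end MaxHelper

section Key
variable {V F : Type*} [Fintype V] [Fintype F] {E : V → F → Prop}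
variable (hc : (BG E).Connected) (hac : (BG E).IsAcyclic)
include hc hac

lemma key (t : F → V → ℝ)
    (hbp : ∀ (r : F) (i : V), E i r → t r i = factorMax E t r (some i)) :
    ∀ (r : F) (i : V), E i r → t r i = ((tN E r i : ℕ) : ℝ) := by
  suffices h : ∀ (n : ℕ) (r : F) (i : V), E i r → (br E r i).card = n →
      t r i = ((tN E r i : ℕ) : ℝ) by
    intro r i hE
    exact h _ r i hE rfl
  intro n
  induction n using Nat.strong_induction_on with
  | _ n IH =>
    intro r i hE hcard
    have hri : (BG E).Adj (Sum.inr r) (Sum.inl i) := adj_inr_inl.mpr hE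
    have hIH : ∀ j ∈ (nbF E r).erase i, ∀ s ∈ (nbV E j).erase r,
        t s j = ((tN E s j : ℕ) : ℝ) := by
      intro j hj s hs
      have hjr : E j r := hJmem hc hac j hj
      have hji : j ≠ i := (mem_erase.mp hj).1
      have hsj : E j s := hKmem hc hac s hs
      have hsr : s ≠ r := (mem_erase.mp hs).1
      have hadj1 : (BG E).Adj (Sum.inl j) (Sum.inr r) := adj_inl_inr.mpr hjr
      have hadj2 : (BG E).Adj (Sum.inr s) (Sum.inl j) := adj_inr_inl.mpr hsj
      have hsub1 : br E s j ⊆ Sset (BG E) (Sum.inl j) (Sum.inr r) :=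
        Sset_subset hc hac hadj1 hadj2 (by simp [hsr])
      have hsub2 : Sset (BG E) (Sum.inl j) (Sum.inr r) ⊆ br E r i :=
        Sset_subset hc hac hri hadj1 (by simp [hji])
      have hnot : Sum.inr r ∉ Sset (BG E) (Sum.inl j) (Sum.inr r) :=
        other_not_mem_Sset hc hac hadj1
      have hin : Sum.inr r ∈ br E r i := self_mem_Sset hc hac hri
      have hlt : (br E s j).card < n := by
        rw [← hcard]
        apply Finset.card_lt_card
        rw [Finset.ssubset_iff_of_subset (hsub1.trans hsub2)]
        exact ⟨Sum.inr r, hin, fun hmem => hnot (hsub1 hmem)⟩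
      exact IH _ hlt s j hsj rfl
    rw [hbp r i hE, (edge_tN hc hac hE).1]
    have hJset : univ.filter (fun j : V => E j r ∧ some j ≠ some i) = (nbF E r).erase i := by
      ext j
      simp only [mem_filter, mem_univ, true_and, mem_erase, nbF, ne_eq, Option.some.injEq]
      tauto
    simp only [factorMax]
    simp only [hJset]
    apply max'_helper (g := fun j => xsum E r j)
    intro j hj
    simp only [varMsg]
    have hKset : univ.filter (fun s : F => E j s ∧ s ≠ r) = (nbV E j).erase r := by
      ext s
      simp only [mem_filter, mem_univ, true_and, mem_erase, nbV, ne_eq]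
      tauto
    rw [hKset]
    have hts : ∑ s ∈ (nbV E j).erase r, t s j = ((xsum E r j : ℕ) : ℝ) := by
      rw [xsum, Nat.cast_sum]
      exact Finset.sum_congr rfl (fun s hs => hIH j hj s hs)
    rw [hts]

end Key

end Bethe

/-- On a finite tree factor graph with variable degrees all equal to `d ≥ 1`, messages
satisfying the zero-temperature BP equations take values in `{0,1}` and the Bethe formula
`∑_r max({0} ∪ {1-∑_{s∈∂j∖r} t_{s→j}}_{j∈∂r}) + ∑_i (1-|∂i|) max{0, 1-∑_{r∈∂i} t_{r→i}}`
equals the maximum set packing size. -/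
theorem bethe_formula_on_tree {V F : Type*} [Fintype V] [Fintype F]
    (E : V → F → Prop) (d : ℕ) (hd : 1 ≤ d)
    (hdeg : ∀ i : V, (Finset.univ.filter (fun r : F => E i r)).card = d)
    (htree : (SimpleGraph.fromRel
        (fun x y : V ⊕ F => ∃ (i : V) (r : F), x = Sum.inl i ∧ y = Sum.inr r ∧ E i r)).IsTree)
    (t : F → V → ℝ)
    (hbp : ∀ (r : F) (i : V), E i r → t r i = factorMax E t r (some i)) :
    (∀ (r : F) (i : V), E i r → t r i = 0 ∨ t r i = 1) ∧
    (∑ r : F, factorMax E t r none) +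
        ∑ i : V, (1 - ((Finset.univ.filter (fun r : F => E i r)).card : ℝ)) *
          max 0 (1 - ∑ r ∈ Finset.univ.filter (fun r : F => E i r), t r i) =
      ((sSup {n : ℕ | ∃ S : Finset V,
          (∀ r : F, (S.filter fun j => E j r).card ≤ 1) ∧ S.card = n} : ℕ) : ℝ) := by
  have htree' : (Bethe.BG E).IsTree := htree
  have hc : (Bethe.BG E).Connected := htree'.isConnected
  have hac : (Bethe.BG E).IsAcyclic := htree'.2
  have hkey := Bethe.key hc hac t hbp
  -- part 1
  have h01 : ∀ (r : F) (i : V), E i r → t r i = 0 ∨ t r i = 1 := by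
    intro r i hE
    have h1 := hkey r i hE
    have h2 := Bethe.edge_tN_le hc hac hE
    rcases Nat.le_one_iff_eq_zero_or_eq_one.mp h2 with h | h
    · left; rw [h1, h]; simp
    · right; rw [h1, h]; simp
  refine ⟨h01, ?_⟩
  -- edge counting
  haveI : Fintype (Bethe.BG E).edgeSet := Fintype.ofFinite _
  have hcount1 : (Bethe.BG E).edgeFinset.card + 1 = Fintype.card (V ⊕ F) :=
    htree'.card_edgeFinset
  have hpairs : (univ.filter (fun p : V × F => E p.1 p.2)).card
      = (Bethe.BG E).edgeFinset.card := by
    apply Finset.card_bij (fun (p : V × F) _ => s(Sum.inl p.1, Sum.inr p.2))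
    · intro p hp
      rw [SimpleGraph.mem_edgeFinset]
      exact Bethe.adj_inl_inr.mpr ((mem_filter.mp hp).2)
    · intro p hp q hq hpq
      rw [Sym2.eq_iff] at hpq
      rcases hpq with ⟨h1, h2⟩ | ⟨h1, h2⟩
      · exact Prod.ext (Sum.inl_injective h1) (Sum.inr_injective h2)
      · exact absurd h1 (by simp)
    · intro e he
      revert he
      refine Sym2.ind ?_ e
      intro x y he
      have hadj : (Bethe.BG E).Adj x y := SimpleGraph.mem_edgeFinset.mp he
      cases y with
      | inl i =>
        obtain ⟨s, rfl, hE⟩ := Bethe.adj_to_inl hadj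
        exact ⟨(i, s), mem_filter.mpr ⟨mem_univ _, hE⟩, Sym2.eq_swap⟩
      | inr r =>
        obtain ⟨j, rfl, hE⟩ := Bethe.adj_to_inr hadj
        exact ⟨(j, r), mem_filter.mpr ⟨mem_univ _, hE⟩, rfl⟩
  have hpairs2 : (univ.filter (fun p : V × F => E p.1 p.2)).card
      = ∑ j : V, (univ.filter (fun r : F => E j r)).card := by
    rw [Finset.card_filter, Fintype.sum_prod_type]
    exact Finset.sum_congr rfl (fun j _ => (Finset.card_filter _ _).symm)
  have hVd : ∑ j : V, (univ.filter (fun r : F => E j r)).card = Fintype.card V * d := by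
    rw [Finset.sum_congr rfl (fun j _ => hdeg j), Finset.sum_const, card_univ, smul_eq_mul]
  have hWcard : Fintype.card (V ⊕ F) = Fintype.card V + Fintype.card F := Fintype.card_sum
  have hcount : Fintype.card V * d + 1 = Fintype.card V + Fintype.card F := by omega
  -- the sSup is the max packing
  have hsSup : sSup {n : ℕ | ∃ S : Finset V,
      (∀ r : F, (S.filter fun j => E j r).card ≤ 1) ∧ S.card = n}
      = Bethe.pk E (univ : Finset (V ⊕ F)) := by
    apply le_antisymm
    · apply csSup_le
      · exact ⟨0, ∅, fun r => by simp, by simp⟩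
      · rintro n ⟨S, hS, rfl⟩
        exact Bethe.le_pks ⟨fun j _ => mem_univ _, fun s _ => hS s⟩ trivial
    · obtain ⟨T, hT, -, hTc⟩ := Bethe.pks_exists (E := E)
        (A := (univ : Finset (V ⊕ F))) (P := fun _ => True) trivial
      rw [Bethe.pk, ← hTc]
      apply le_csSup
      · refine ⟨Fintype.card V, ?_⟩
        rintro n ⟨S, _, rfl⟩
        exact le_trans (Finset.card_le_univ S) (le_of_eq Finset.card_univ)
      · exact ⟨T, fun r => hT.2 r (mem_univ _), rfl⟩
  rw [hsSup]
  -- rewrite each factor term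
  have hfr : ∀ r : F, factorMax E t r none
      = (Bethe.pk E (univ : Finset (V ⊕ F)) : ℝ)
        - ∑ j ∈ Bethe.nbF E r, ∑ s ∈ (Bethe.nbV E j).erase r, (Bethe.pk E (Bethe.br E s j) : ℝ) := by
    intro r
    have h1 := Bethe.total_r (E := E) hc hac r
    have hfm : factorMax E t r none
        = (((Bethe.nbF E r).sup (fun j => 1 - Bethe.xsum E r j) : ℕ) : ℝ) := by
      have hset : univ.filter (fun j : V => E j r ∧ some j ≠ (none : Option V)) = Bethe.nbF E r := by
        ext j
        simp [Bethe.nbF]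
      simp only [factorMax]
      simp only [hset]
      apply Bethe.max'_helper (g := fun j => Bethe.xsum E r j)
      intro j hj
      simp only [varMsg]
      have hKset : univ.filter (fun s : F => E j s ∧ s ≠ r) = (Bethe.nbV E j).erase r := by
        ext s
        simp only [mem_filter, mem_univ, true_and, mem_erase, Bethe.nbV, ne_eq]
        tauto
      rw [hKset]
      have hts : ∑ s ∈ (Bethe.nbV E j).erase r, t s j = ((Bethe.xsum E r j : ℕ) : ℝ) := by
        rw [Bethe.xsum, Nat.cast_sum]
        exact Finset.sum_congr rfl (fun s hs => hkey s j (Bethe.hKmem hc hac s hs))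
      rw [hts]
    rw [hfm]
    have hc1 : (Bethe.pk E (univ : Finset (V ⊕ F)) : ℝ)
        = (Bethe.pk0 E (univ : Finset (V ⊕ F)) r : ℝ)
          + (((Bethe.nbF E r).sup (fun j => 1 - Bethe.xsum E r j) : ℕ) : ℝ) := by
      rw [h1.1]; push_cast; ring
    have hc2 : (Bethe.pk0 E (univ : Finset (V ⊕ F)) r : ℝ)
        = ∑ j ∈ Bethe.nbF E r, ∑ s ∈ (Bethe.nbV E j).erase r, (Bethe.pk E (Bethe.br E s j) : ℝ) := by
      rw [h1.2]; push_cast; ring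
    rw [hc2] at hc1
    linarith
  -- rewrite each variable term
  have hmaxc : ∀ x : ℕ, max (0:ℝ) (1 - (x:ℝ)) = ((1 - x : ℕ) : ℝ) := by
    intro x
    rcases Nat.eq_zero_or_pos x with h | h
    · subst h; simp
    · have h0 : 1 - x = 0 := by omega
      rw [h0]
      have hge : (1:ℝ) ≤ (x:ℝ) := by exact_mod_cast h
      have : (1:ℝ) - x ≤ 0 := by linarith
      simp [max_eq_left this]
  have hgi : ∀ i : V, max (0:ℝ) (1 - ∑ r ∈ Finset.univ.filter (fun r : F => E i r), t r i)
      = (Bethe.pk E (univ : Finset (V ⊕ F)) : ℝ)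
        - ∑ r ∈ Bethe.nbV E i, (Bethe.pk E (Bethe.br E r i) : ℝ) := by
    intro i
    have h1 := Bethe.total_i (E := E) hc hac i
    have hts : ∑ r ∈ Finset.univ.filter (fun r : F => E i r), t r i
        = ((∑ r ∈ Bethe.nbV E i, Bethe.tN E r i : ℕ) : ℝ) := by
      rw [Nat.cast_sum]
      apply Finset.sum_congr rfl
      intro r hr
      exact hkey r i ((mem_filter.mp hr).2)
    rw [hts, hmaxc]
    have hc1 : (Bethe.pk E (univ : Finset (V ⊕ F)) : ℝ)
        = (∑ r ∈ Bethe.nbV E i, (Bethe.pk E (Bethe.br E r i) : ℝ))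
          + ((1 - ∑ r ∈ Bethe.nbV E i, Bethe.tN E r i : ℕ) : ℝ) := by
      exact_mod_cast congrArg (Nat.cast : ℕ → ℝ) h1
    linarith
  rw [Finset.sum_congr rfl (fun r (_ : r ∈ univ) => hfr r)]
  have hterm : ∀ i ∈ (univ : Finset V),
      (1 - ((Finset.univ.filter (fun r : F => E i r)).card : ℝ))
        * max (0:ℝ) (1 - ∑ r ∈ Finset.univ.filter (fun r : F => E i r), t r i)
      = (1 - (d:ℝ)) * ((Bethe.pk E (univ : Finset (V ⊕ F)) : ℝ)
          - ∑ r ∈ Bethe.nbV E i, (Bethe.pk E (Bethe.br E r i) : ℝ)) := by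
    intro i _
    rw [hgi i, hdeg i]
  rw [Finset.sum_congr rfl hterm]
  -- now pure algebra
  set P : ℝ := (Bethe.pk E (univ : Finset (V ⊕ F)) : ℝ) with hP
  set Q : F → ℝ := fun r => ∑ j ∈ Bethe.nbF E r, ∑ s ∈ (Bethe.nbV E j).erase r,
    (Bethe.pk E (Bethe.br E s j) : ℝ) with hQ
  set S : V → ℝ := fun i => ∑ r ∈ Bethe.nbV E i, (Bethe.pk E (Bethe.br E r i) : ℝ) with hS
  have e1 : ∑ r : F, (P - Q r) = (Fintype.card F : ℝ) * P - ∑ r : F, Q r := by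
    rw [Finset.sum_sub_distrib, Finset.sum_const, card_univ, nsmul_eq_mul]
  have e2 : ∑ i : V, (1 - (d:ℝ)) * (P - S i)
      = (1 - (d:ℝ)) * ((Fintype.card V : ℝ) * P - ∑ i : V, S i) := by
    rw [← Finset.mul_sum, Finset.sum_sub_distrib, Finset.sum_const, card_univ, nsmul_eq_mul]
  -- the exchange identity
  have hswap : ∑ r : F, Q r = ((d : ℝ) - 1) * ∑ i : V, S i := by
    have h1 : ∑ r : F, Q r = ∑ r : F, ∑ j : V,
        (if E j r then ∑ s ∈ (Bethe.nbV E j).erase r, (Bethe.pk E (Bethe.br E s j) : ℝ) else 0) := by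
      apply Finset.sum_congr rfl
      intro r _
      rw [hQ]
      rw [← Finset.sum_filter]
      rfl
    have h2 : ∑ r : F, Q r = ∑ j : V, ∑ r ∈ Bethe.nbV E j,
        ∑ s ∈ (Bethe.nbV E j).erase r, (Bethe.pk E (Bethe.br E s j) : ℝ) := by
      rw [h1, Finset.sum_comm]
      apply Finset.sum_congr rfl
      intro j _
      rw [← Finset.sum_filter]
      rfl
    rw [h2, Finset.mul_sum]
    apply Finset.sum_congr rfl
    intro j _
    have h3 : ∀ r ∈ Bethe.nbV E j, ∑ s ∈ (Bethe.nbV E j).erase r, (Bethe.pk E (Bethe.br E s j) : ℝ)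
        = (∑ s ∈ Bethe.nbV E j, (Bethe.pk E (Bethe.br E s j) : ℝ)) - (Bethe.pk E (Bethe.br E r j) : ℝ) := by
      intro r hr
      have := Finset.sum_erase_add (Bethe.nbV E j) (fun s => (Bethe.pk E (Bethe.br E s j) : ℝ)) hr
      linarith
    rw [Finset.sum_congr rfl h3, Finset.sum_sub_distrib, Finset.sum_const]
    have hcard : (Bethe.nbV E j).card = d := hdeg j
    rw [hcard, nsmul_eq_mul, hS]
    ring
  -- the vertex/factor count identity
  have hone : (Fintype.card F : ℝ) + (1 - (d:ℝ)) * (Fintype.card V : ℝ) = 1 := by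
    have h1 : (Fintype.card V : ℝ) * d + 1 = (Fintype.card V : ℝ) + (Fintype.card F : ℝ) := by
      exact_mod_cast hcount
    nlinarith [h1]
  rw [e1, e2, hswap]
  linear_combination P * hone
end

section
/- Let d ≥ 2 be an integer, 0 < c < e/(d−1), and let p* ∈ (0,1] be the unique fixed point of p ↦ exp(−c·p^{d−1}). Then the RS density ρ(d,c) = (d/c)(1 − p*) + (1 − d)·p*^d lies in (0, 1]. -/
open Set

private lemma aux_pow_ineq (n : ℕ) (p : ℝ) (h0 : 0 ≤ p) (h1 : p ≤ 1) :
    ((n : ℝ) + 1) * p ^ n ≤ 1 + (n : ℝ) * p ^ (n + 1) := by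
  induction n with
  | zero => simp
  | succ n ih =>
    have hpn : p ^ (n + 1) ≤ 1 := pow_le_one₀ h0 h1
    have hmul : (((n : ℝ) + 1) * p ^ n) * p ≤ (1 + (n : ℝ) * p ^ (n + 1)) * p :=
      mul_le_mul_of_nonneg_right ih h0
    have hfact : (1 - p) * (1 - p ^ (n + 1)) ≥ 0 :=
      mul_nonneg (by linarith) (by linarith)
    have hppow : p ^ n * p = p ^ (n + 1) := by ring
    have hppow2 : p ^ (n + 1) * p = p ^ (n + 2) := by ring
    push_cast
    nlinarith [hmul, hfact]

/-- For `d ≥ 2`, `0 < c < e/(d-1)` and `p*` the fixed point of `p ↦ exp (-c p^(d-1))` in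
`(0,1]`, the RS density `ρ = (d/c)(1-p*) + (1-d) p*^d` lies in `(0,1]`. -/
theorem grp_rs_density_mem_Ioc (d : ℕ) (hd : 2 ≤ d) (c : ℝ) (hc : 0 < c)
    (hcs : c < Real.exp 1 / ((d : ℝ) - 1))
    (p : ℝ) (hp : p ∈ Ioc (0:ℝ) 1) (hfix : p = Real.exp (-c * p ^ (d - 1))) :
    ((d : ℝ) / c) * (1 - p) + (1 - (d : ℝ)) * p ^ d ∈ Ioc (0:ℝ) 1 := by
  obtain ⟨hp0, hp1⟩ := hp
  have hlog : Real.log p = -c * p ^ (d - 1) := by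
    conv_lhs => rw [hfix]
    rw [Real.log_exp]
  have hpowpos : 0 < p ^ (d - 1) := pow_pos hp0 _
  have hpdpos : 0 < p ^ d := pow_pos hp0 _
  have hsub : (d - 1) + 1 = d := Nat.sub_add_cancel (by omega)
  have hpow_succ : p ^ (d - 1) * p = p ^ d := by
    rw [← pow_succ, hsub]
  -- key2 : 1 - p ≤ c * p^(d-1)
  have key2 : 1 - p ≤ c * p ^ (d - 1) := by
    have h := Real.log_le_sub_one_of_pos hp0
    nlinarith [hlog]
  -- key1 : c * p^d ≤ 1 - p
  have key1 : c * p ^ d ≤ 1 - p := by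
    have h := Real.log_le_sub_one_of_pos (inv_pos.mpr hp0)
    rw [Real.log_inv] at h
    -- -log p ≤ p⁻¹ - 1, so c * p^(d-1) ≤ p⁻¹ - 1
    have h2 : c * p ^ (d - 1) ≤ p⁻¹ - 1 := by linarith [hlog.symm.le]
    have h3 : c * p ^ (d - 1) * p ≤ (p⁻¹ - 1) * p :=
      mul_le_mul_of_nonneg_right h2 hp0.le
    have hinv : (p⁻¹ - 1) * p = 1 - p := by
      field_simp
    rw [mul_assoc, hpow_succ, hinv] at h3
    exact h3
  have hd1 : (1 : ℝ) ≤ (d : ℝ) := by exact_mod_cast Nat.one_le_of_lt hd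
  -- AM-GM: d * p^(d-1) ≤ 1 + (d-1) * p^d
  have amgm : (d : ℝ) * p ^ (d - 1) ≤ 1 + ((d : ℝ) - 1) * p ^ d := by
    have h := aux_pow_ineq (d - 1) p hp0.le hp1
    rw [hsub] at h
    have hcast : ((d - 1 : ℕ) : ℝ) = (d : ℝ) - 1 := by
      have : (1 : ℕ) ≤ d := by omega
      push_cast [this]
      ring
    rw [hcast] at h
    linarith
  constructor
  · -- positivity: (d/c)(1-p) ≥ d p^d, so ρ ≥ p^d > 0
    have h1 : (d : ℝ) * p ^ d ≤ (d : ℝ) / c * (1 - p) := by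
      rw [div_mul_eq_mul_div, le_div_iff₀ hc]
      nlinarith [key1]
    nlinarith [hpdpos]
  · -- upper bound
    have h1 : (d : ℝ) / c * (1 - p) ≤ (d : ℝ) * p ^ (d - 1) := by
      rw [div_mul_eq_mul_div, div_le_iff₀ hc]
      nlinarith [key2]
    nlinarith [amgm]
end

section
/- Let d ≥ 2 be an integer and define, for c ∈ (0, e/(d−1)), p*(c) as the unique solution in (0,1] of p = exp(−c p^{d−1}) and ρ(c) = (d/c)(1 − p*(c)) + (1 − d)·p*(c)^d. Then ρ is a strictly decreasing function of c on (0, e/(d−1)). -/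
open Set

lemma aux_h_pos {x : ℝ} (h0 : 0 < x) (h1 : x < 1) : 0 < 1 - x + x * Real.log x := by
  have hinv : Real.log x⁻¹ < x⁻¹ - 1 :=
    Real.log_lt_sub_one_of_pos (inv_pos.mpr h0) (by
      intro h
      have : x = 1 := by field_simp at h; linarith
      linarith)
  rw [Real.log_inv] at hinv
  have hpi : x * x⁻¹ = 1 := mul_inv_cancel₀ h0.ne'
  nlinarith [mul_lt_mul_of_pos_left hinv h0]

lemma psi_hasDeriv (d : ℕ) (hd : 2 ≤ d) {x : ℝ} (h0 : 0 < x) (h1 : x < 1) :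
    HasDerivAt (fun q : ℝ => (d:ℝ) * (q ^ (d-1) * (1 - q) / (-Real.log q)) + (1 - (d:ℝ)) * q ^ d)
      ((d:ℝ) * ((((((d-1:ℕ):ℝ) * x ^ (d-1-1)) * (1 - x) + x ^ (d-1) * (-1)) * (-Real.log x)
        - x ^ (d-1) * (1 - x) * (-x⁻¹)) / (-Real.log x)^2)
        + (1 - (d:ℝ)) * ((d:ℝ) * x ^ (d-1))) x := by
  have hlog : Real.log x < 0 := Real.log_neg h0 h1
  have hq : -Real.log x ≠ 0 := by linarith
  have hN : HasDerivAt (fun q : ℝ => q ^ (d-1) * (1-q))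
      ((((d-1:ℕ):ℝ) * x ^ (d-1-1)) * (1 - x) + x ^ (d-1) * (-1)) x :=
    (hasDerivAt_pow (d-1) x).mul ((hasDerivAt_id x).const_sub 1)
  have hQ : HasDerivAt (fun q : ℝ => -Real.log q) (-x⁻¹) x :=
    (Real.hasDerivAt_log h0.ne').neg
  have hDiv := hN.div hQ hq
  exact (hDiv.const_mul (d:ℝ)).add ((hasDerivAt_pow d x).const_mul (1 - (d:ℝ)))

lemma psi_deriv_pos (d : ℕ) (hd : 2 ≤ d) {x : ℝ} (h0 : 0 < x) (h1 : x < 1) :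
    0 < (d:ℝ) * ((((((d-1:ℕ):ℝ) * x ^ (d-1-1)) * (1 - x) + x ^ (d-1) * (-1)) * (-Real.log x)
        - x ^ (d-1) * (1 - x) * (-x⁻¹)) / (-Real.log x)^2)
        + (1 - (d:ℝ)) * ((d:ℝ) * x ^ (d-1)) := by
  have hlog : Real.log x < 0 := Real.log_neg h0 h1
  set L := Real.log x with hL
  set P := x ^ (d-1-1) with hP
  have hPpos : 0 < P := pow_pos h0 _
  have hpow : x ^ (d-1) = P * x := by
    rw [hP, ← pow_succ]
    congr 1
    omega
  have hh := aux_h_pos h0 h1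
  have hn1 : (1:ℝ) ≤ ((d-1:ℕ):ℝ) := by
    have : 1 ≤ d - 1 := by omega
    exact_mod_cast this
  have hqpos : 0 < -L := by linarith
  have key : (d:ℝ) * ((((((d-1:ℕ):ℝ) * P) * (1 - x) + (P * x) * (-1)) * (-L)
        - (P * x) * (1 - x) * (-x⁻¹)) / (-L)^2)
        + (1 - (d:ℝ)) * ((d:ℝ) * (P * x))
      = (d:ℝ) * P * ((((d-1:ℕ):ℝ) * (-L) + 1) * (1 - x + x * L)) / (-L)^2 := by
    have hdcast : (1 : ℝ) - (d:ℝ) = -((d-1:ℕ):ℝ) := by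
      have : ((d-1:ℕ):ℝ) = (d:ℝ) - 1 := by
        have : (1:ℕ) ≤ d := by omega
        push_cast [Nat.cast_sub this]
        ring
      rw [this]; ring
    rw [hdcast]
    field_simp [h0.ne', hlog.ne]
    ring

  rw [hpow, key]
  apply div_pos
  · apply mul_pos (mul_pos (by positivity) hPpos)
    apply mul_pos _ hh
    nlinarith
  · positivity

lemma psi_strictMono (d : ℕ) (hd : 2 ≤ d) :
    StrictMonoOn (fun q : ℝ => (d:ℝ) * (q ^ (d-1) * (1 - q) / (-Real.log q)) + (1 - (d:ℝ)) * q ^ d)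
      (Ioo (0:ℝ) 1) := by
  apply strictMonoOn_of_deriv_pos (convex_Ioo 0 1)
  · intro x hx
    exact (psi_hasDeriv d hd hx.1 hx.2).continuousAt.continuousWithinAt
  · intro x hx
    rw [interior_Ioo] at hx
    rw [(psi_hasDeriv d hd hx.1 hx.2).deriv]
    exact psi_deriv_pos d hd hx.1 hx.2

/-- For fixed `d ≥ 2`, with `p* c` the unique fixed point in `(0,1]` of `p ↦ exp (-c p^(d-1))`,
the RS density `ρ c = (d/c)(1 - p* c) + (1-d)(p* c)^d` is strictly decreasing in `c` on
`(0, e/(d-1))`. -/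
theorem grp_rs_density_strictAntiOn (d : ℕ) (hd : 2 ≤ d) (p : ℝ → ℝ)
    (hp : ∀ c ∈ Ioo (0:ℝ) (Real.exp 1 / ((d : ℝ) - 1)),
      p c ∈ Ioc (0:ℝ) 1 ∧ p c = Real.exp (-c * p c ^ (d - 1))) :
    StrictAntiOn (fun c => ((d : ℝ) / c) * (1 - p c) + (1 - (d : ℝ)) * p c ^ d)
      (Ioo (0:ℝ) (Real.exp 1 / ((d : ℝ) - 1))) := by
  intro c1 h1 c2 h2 hlt
  obtain ⟨⟨hp1pos, hp1le⟩, hfix1⟩ := hp c1 h1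
  obtain ⟨⟨hp2pos, hp2le⟩, hfix2⟩ := hp c2 h2
  have hc1 : 0 < c1 := h1.1
  have hc2 : 0 < c2 := h2.1
  -- p c < 1
  have hp1lt : p c1 < 1 := by
    rw [hfix1]
    apply Real.exp_lt_one_iff.mpr
    have : 0 < c1 * p c1 ^ (d-1) := mul_pos hc1 (pow_pos hp1pos _)
    linarith
  have hp2lt : p c2 < 1 := by
    rw [hfix2]
    apply Real.exp_lt_one_iff.mpr
    have : 0 < c2 * p c2 ^ (d-1) := mul_pos hc2 (pow_pos hp2pos _)
    linarith
  -- log relations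
  have hlog1 : Real.log (p c1) = -c1 * p c1 ^ (d-1) := by
    conv_lhs => rw [hfix1]
    exact Real.log_exp _
  have hlog2 : Real.log (p c2) = -c2 * p c2 ^ (d-1) := by
    conv_lhs => rw [hfix2]
    exact Real.log_exp _
  -- p c2 < p c1
  have hplt : p c2 < p c1 := by
    by_contra hcon
    push_neg at hcon
    have hlogle : Real.log (p c1) ≤ Real.log (p c2) :=
      Real.log_le_log hp1pos hcon
    have hple : p c1 ^ (d-1) ≤ p c2 ^ (d-1) :=
      pow_le_pow_left₀ hp1pos.le hcon _
    have h1' : c2 * p c2 ^ (d-1) ≤ c1 * p c1 ^ (d-1) := by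
      rw [hlog1, hlog2] at hlogle; linarith
    have h2' : c1 * p c1 ^ (d-1) ≤ c1 * p c2 ^ (d-1) :=
      mul_le_mul_of_nonneg_left hple hc1.le
    have hpowpos : 0 < p c2 ^ (d-1) := pow_pos hp2pos _
    have : c2 ≤ c1 := le_of_mul_le_mul_right (by linarith) hpowpos
    linarith
  -- rewrite the density in terms of ψ
  have hval : ∀ c : ℝ, 0 < c → 0 < p c → p c < 1 →
      Real.log (p c) = -c * p c ^ (d-1) →
      ((d : ℝ) / c) * (1 - p c) + (1 - (d : ℝ)) * p c ^ d
        = (d:ℝ) * (p c ^ (d-1) * (1 - p c) / (-Real.log (p c))) + (1 - (d:ℝ)) * p c ^ d := by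
    intro c hc hpos hlt1 hlog
    have hpowpos : 0 < p c ^ (d-1) := pow_pos hpos _
    rw [hlog]
    have : -(-c * p c ^ (d-1)) = c * p c ^ (d-1) := by ring
    rw [this]
    field_simp
  simp only []
  rw [hval c1 hc1 hp1pos hp1lt hlog1, hval c2 hc2 hp2pos hp2lt hlog2]
  exact psi_strictMono d hd ⟨hp2pos, hp2lt⟩ ⟨hp1pos, hp1lt⟩ hplt
end
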